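/- arXiv:1308.0269 — 6 statements merged into one kernel-verified Lean document; each statement's English description precedes it below -/
import Mathlib

section
/- For every n ≥ 2, the digraphs F¹_{2n} and F²_{2n} each have minimum semi-degree δ⁰ equal to n and contain no anti-directed Hamiltonian cycle. -/
noncomputable def outDeg {V : Type*} (E : V → V → Prop) (v : V) : ℕ := {w | E v w}.ncard
noncomputable def inDeg {V : Type*} (E : V → V → Prop) (v : V) : ℕ := {w | E w v}.ncard

/-- `D` has an anti-directed Hamiltonian cycle on its `2*n` vertices. -/
def HasADHC {V : Type*} (E : V → V → Prop) (n : ℕ) : Prop :=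
  ∃ g : ZMod (2 * n) → V, Function.Bijective g ∧
    ∀ j : ZMod (2 * n), E (g (2 * j)) (g (2 * j + 1)) ∧ E (g (2 * j + 2)) (g (2 * j + 1))

/-- Vertex set of `F_{2(m+1),1}` : `X₁ = {0} × Fin m`, `X₂ = {1} × Fin m`,
`y₁ = inr 0`, `y₂ = inr 1`. -/
abbrev FVert (m : ℕ) := (Fin 2 × Fin m) ⊕ Fin 2

/-- The digraph `F_{2(m+1),1}`. -/
def adjBase (m : ℕ) : FVert m → FVert m → Prop
  | Sum.inl (i, _), Sum.inl (j, _) => i ≠ j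
  | Sum.inl (i, _), Sum.inr j => i ≠ j
  | Sum.inr i, Sum.inl (j, _) => i = j
  | Sum.inr _, Sum.inr _ => False

/-- The digraph `F¹_{2(m+1)}`: `F_{2(m+1),1}` plus the edges `(y₁,y₂)` and `(y₂,y₁)`. -/
def adjF1 (m : ℕ) : FVert m → FVert m → Prop
  | Sum.inl (i, _), Sum.inl (j, _) => i ≠ j
  | Sum.inl (i, _), Sum.inr j => i ≠ j
  | Sum.inr i, Sum.inl (j, _) => i = j
  | Sum.inr i, Sum.inr j => i ≠ j

/-- The digraph `F²_{2(m+1)}` with special vertex `x ∈ X₁`: `F_{2(m+1),1}` plus the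
edges `(y₁,y₂)`, `(y₂,x)` and `(x,y₁)`. -/
def adjF2 (m : ℕ) (x : Fin m) (u v : FVert m) : Prop :=
  adjBase m u v ∨ (u = Sum.inr 0 ∧ v = Sum.inr 1) ∨
    (u = Sum.inr 1 ∧ v = Sum.inl (0, x)) ∨ (u = Sum.inl (0, x) ∧ v = Sum.inr 0)

/-! ### Auxiliary material -/

section Counting

lemma fin2_ne (i j : Fin 2) : i ≠ j ↔ j = i + 1 := by revert i j; decide
lemma fin2_ne' (i j : Fin 2) : j ≠ i ↔ j = i + 1 := by revert i j; decide

lemma ncard_split {m : ℕ} (P : FVert m → Prop) :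
    {w | P w}.ncard
      = {p : Fin 2 × Fin m | P (Sum.inl p)}.ncard + {i : Fin 2 | P (Sum.inr i)}.ncard := by
  have h : {w | P w} = Sum.inl '' {p | P (Sum.inl p)} ∪ Sum.inr '' {i | P (Sum.inr i)} := by
    ext w; rcases w with p | i <;> simp
  rw [h, Set.ncard_union_eq ?_ (Set.toFinite _) (Set.toFinite _),
    Set.ncard_image_of_injective _ Sum.inl_injective,
    Set.ncard_image_of_injective _ Sum.inr_injective]
  rw [Set.disjoint_left]
  rintro w ⟨p, -, rfl⟩ ⟨i, -, h⟩
  simp at h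

lemma ncard_fiber {m : ℕ} (j : Fin 2) : {p : Fin 2 × Fin m | p.1 = j}.ncard = m := by
  have h : {p : Fin 2 × Fin m | p.1 = j} = (fun b => (j, b)) '' Set.univ := by
    ext ⟨i, b⟩
    simp [Prod.ext_iff, eq_comm]
  rw [h, Set.ncard_image_of_injective _ (fun b b' hb => by simpa using congrArg Prod.snd hb),
    Set.ncard_univ, Nat.card_eq_fintype_card, Fintype.card_fin]

lemma ncard_single_fin2 (c : Fin 2) : {r : Fin 2 | r = c}.ncard = 1 := by
  rw [Set.setOf_eq_eq_singleton, Set.ncard_singleton]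

lemma ncard_fiber_union {m : ℕ} (j : Fin 2) (y : Fin 2 × Fin m) (hy : y.1 ≠ j) :
    ({p | p.1 = j} ∪ {y} : Set (Fin 2 × Fin m)).ncard = m + 1 := by
  rw [Set.ncard_union_eq ?_ (Set.toFinite _) (Set.toFinite _), ncard_fiber, Set.ncard_singleton]
  rw [Set.disjoint_left]
  rintro p hp rfl
  exact hy hp

/-! degrees of F¹ -/

lemma outDeg_F1 {m : ℕ} (v : FVert m) : outDeg (adjF1 m) v = m + 1 := by
  rcases v with ⟨i, a⟩ | i <;> rw [outDeg, ncard_split]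
  · have h1 : {p : Fin 2 × Fin m | adjF1 m (Sum.inl (i,a)) (Sum.inl p)} = {p | p.1 = i + 1} := by
      ext ⟨j, b⟩; simp only [adjF1, Set.mem_setOf_eq]; exact fin2_ne i j
    have h2 : {r : Fin 2 | adjF1 m (Sum.inl (i,a)) (Sum.inr r)} = {r | r = i + 1} := by
      ext r; simp only [adjF1, Set.mem_setOf_eq]; exact fin2_ne i r
    rw [h1, h2, ncard_fiber, ncard_single_fin2]
  · have h1 : {p : Fin 2 × Fin m | adjF1 m (Sum.inr i) (Sum.inl p)} = {p | p.1 = i} := by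
      ext ⟨j, b⟩; simp only [adjF1, Set.mem_setOf_eq]; exact eq_comm
    have h2 : {r : Fin 2 | adjF1 m (Sum.inr i) (Sum.inr r)} = {r | r = i + 1} := by
      ext r; simp only [adjF1, Set.mem_setOf_eq]; exact fin2_ne i r
    rw [h1, h2, ncard_fiber, ncard_single_fin2]

lemma inDeg_F1 {m : ℕ} (v : FVert m) : inDeg (adjF1 m) v = m + 1 := by
  rcases v with ⟨i, a⟩ | i <;> rw [inDeg, ncard_split]
  · have h1 : {p : Fin 2 × Fin m | adjF1 m (Sum.inl p) (Sum.inl (i,a))} = {p | p.1 = i + 1} := by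
      ext ⟨j, b⟩; simp only [adjF1, Set.mem_setOf_eq]; exact fin2_ne' i j
    have h2 : {r : Fin 2 | adjF1 m (Sum.inr r) (Sum.inl (i,a))} = {r | r = i} := by
      ext r; simp only [adjF1, Set.mem_setOf_eq]
    rw [h1, h2, ncard_fiber, ncard_single_fin2]
  · have h1 : {p : Fin 2 × Fin m | adjF1 m (Sum.inl p) (Sum.inr i)} = {p | p.1 = i + 1} := by
      ext ⟨j, b⟩; simp only [adjF1, Set.mem_setOf_eq]; exact fin2_ne' i j
    have h2 : {r : Fin 2 | adjF1 m (Sum.inr r) (Sum.inr i)} = {r | r = i + 1} := by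
      ext r; simp only [adjF1, Set.mem_setOf_eq]; exact fin2_ne' i r
    rw [h1, h2, ncard_fiber, ncard_single_fin2]

/-! degrees of the base digraph at `X` vertices, and of `F²` at the special vertices -/

lemma outDeg_base_inl {m : ℕ} (i : Fin 2) (a : Fin m) :
    outDeg (adjBase m) (Sum.inl (i,a)) = m + 1 := by
  rw [outDeg, ncard_split]
  have h1 : {p : Fin 2 × Fin m | adjBase m (Sum.inl (i,a)) (Sum.inl p)} = {p | p.1 = i + 1} := by
    ext ⟨j, b⟩; simp only [adjBase, Set.mem_setOf_eq]; exact fin2_ne i j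
  have h2 : {r : Fin 2 | adjBase m (Sum.inl (i,a)) (Sum.inr r)} = {r | r = i + 1} := by
    ext r; simp only [adjBase, Set.mem_setOf_eq]; exact fin2_ne i r
  rw [h1, h2, ncard_fiber, ncard_single_fin2]

lemma inDeg_base_inl {m : ℕ} (i : Fin 2) (a : Fin m) :
    inDeg (adjBase m) (Sum.inl (i,a)) = m + 1 := by
  rw [inDeg, ncard_split]
  have h1 : {p : Fin 2 × Fin m | adjBase m (Sum.inl p) (Sum.inl (i,a))} = {p | p.1 = i + 1} := by
    ext ⟨j, b⟩; simp only [adjBase, Set.mem_setOf_eq]; exact fin2_ne' i j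
  have h2 : {r : Fin 2 | adjBase m (Sum.inr r) (Sum.inl (i,a))} = {r | r = i} := by
    ext r; simp only [adjBase, Set.mem_setOf_eq]
  rw [h1, h2, ncard_fiber, ncard_single_fin2]

lemma outDeg_F2_y1 {m : ℕ} (x : Fin m) : outDeg (adjF2 m x) (Sum.inr 0) = m + 1 := by
  rw [outDeg, ncard_split]
  have h1 : {p : Fin 2 × Fin m | adjF2 m x (Sum.inr 0) (Sum.inl p)} = {p | p.1 = 0} := by
    ext ⟨j, b⟩; simp [adjF2, adjBase, eq_comm]
  have h2 : {r : Fin 2 | adjF2 m x (Sum.inr 0) (Sum.inr r)} = {r | r = 1} := by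
    ext r; simp [adjF2, adjBase]
  rw [h1, h2, ncard_fiber, ncard_single_fin2]

lemma outDeg_F2_y2 {m : ℕ} (x : Fin m) : outDeg (adjF2 m x) (Sum.inr 1) = m + 1 := by
  rw [outDeg, ncard_split]
  have h1 : {p : Fin 2 × Fin m | adjF2 m x (Sum.inr 1) (Sum.inl p)}
      = ({p | p.1 = 1} ∪ {(0, x)}) := by
    ext ⟨j, b⟩; simp [adjF2, adjBase, eq_comm, Prod.ext_iff, and_comm]; tauto
  have h2 : {r : Fin 2 | adjF2 m x (Sum.inr 1) (Sum.inr r)} = (∅ : Set (Fin 2)) := by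
    ext r; simp [adjF2, adjBase]
  rw [h1, h2, ncard_fiber_union (m := m) 1 (0,x) (by simp), Set.ncard_empty]

lemma inDeg_F2_y1 {m : ℕ} (x : Fin m) : inDeg (adjF2 m x) (Sum.inr 0) = m + 1 := by
  rw [inDeg, ncard_split]
  have h1 : {p : Fin 2 × Fin m | adjF2 m x (Sum.inl p) (Sum.inr 0)}
      = ({p | p.1 = 1} ∪ {(0, x)}) := by
    ext ⟨j, b⟩
    fin_cases j <;> simp [adjF2, adjBase, Prod.ext_iff, and_comm, eq_comm]
  have h2 : {r : Fin 2 | adjF2 m x (Sum.inr r) (Sum.inr 0)} = (∅ : Set (Fin 2)) := by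
    ext r; simp [adjF2, adjBase]
  rw [h1, h2, ncard_fiber_union (m := m) 1 (0,x) (by simp), Set.ncard_empty]

lemma inDeg_F2_y2 {m : ℕ} (x : Fin m) : inDeg (adjF2 m x) (Sum.inr 1) = m + 1 := by
  rw [inDeg, ncard_split]
  have h1 : {p : Fin 2 × Fin m | adjF2 m x (Sum.inl p) (Sum.inr 1)} = {p | p.1 = 0} := by
    ext ⟨j, b⟩
    simp [adjF2, adjBase]
    exact fin2_ne' 1 j
  have h2 : {r : Fin 2 | adjF2 m x (Sum.inr r) (Sum.inr 1)} = {r | r = 0} := by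
    ext r; simp [adjF2, adjBase]
  rw [h1, h2, ncard_fiber, ncard_single_fin2]

end Counting

/-! ### The parity of a `ZMod N` element -/

section NoADHC

variable {N : ℕ} [NeZero N]

/-- parity of a `ZMod N` element -/
def par (q : ZMod N) : ZMod 2 := (q.val : ZMod 2)

lemma par_natCast (a : ℕ) (h : 2 ∣ N) : par ((a : ℕ) : ZMod N) = (a : ZMod 2) := by
  rw [par, ZMod.val_natCast]
  have hN : ((N : ℕ) : ZMod 2) = 0 := (ZMod.natCast_eq_zero_iff N 2).mpr h
  conv_rhs => rw [← Nat.mod_add_div a N]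
  push_cast
  rw [hN]
  ring

lemma par_add_one (h : 2 ∣ N) (q : ZMod N) : par (q + 1) = par q + 1 := by
  have h1 : ((q.val + 1 : ℕ) : ZMod N) = q + 1 := by
    push_cast
    rw [ZMod.natCast_val, ZMod.cast_id]
  have := par_natCast (N := N) (q.val + 1) h
  rw [h1] at this
  rw [this]
  push_cast
  rw [par]

lemma par_even (h : 2 ∣ N) (q : ZMod N) (hq : par q = 0) : ∃ j : ZMod N, q = 2 * j := by
  have h2 : (2 : ℕ) ∣ q.val := by
    have : ((q.val : ℕ) : ZMod 2) = 0 := hq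
    exact (ZMod.natCast_eq_zero_iff _ 2).mp this
  obtain ⟨k, hk⟩ := h2
  refine ⟨(k : ZMod N), ?_⟩
  have : ((q.val : ℕ) : ZMod N) = q := by rw [ZMod.natCast_val, ZMod.cast_id]
  rw [← this, hk]
  push_cast
  ring

lemma par_odd (h : 2 ∣ N) (q : ZMod N) (hq : par q = 1) : ∃ j : ZMod N, q = 2 * j + 1 := by
  have : par (q + 1) = 0 := by rw [par_add_one h, hq]; decide
  obtain ⟨j, hj⟩ := par_even h _ this
  exact ⟨j - 1, by linear_combination hj⟩

end NoADHC

/-! ### Typed bad edges -/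

section TBsec

variable {V : Type*} {N : ℕ} [NeZero N] (g : ZMod N → V)

/-- "typed bad edge at position q, with tail `a` and head `b`" -/
def TB (a b : V) (q : ZMod N) : Prop :=
  (par q = 0 ∧ g q = a ∧ g (q + 1) = b) ∨ (par q = 1 ∧ g (q + 1) = a ∧ g q = b)

lemma TB_occ_a (hN : 2 ∣ N) {a b : V} {q : ZMod N} (h : TB g a b q) :
    ∃ p, g p = a ∧ par p = 0 := by
  rcases h with ⟨h1, h2, _⟩ | ⟨h1, h2, _⟩
  · exact ⟨q, h2, h1⟩
  · exact ⟨q + 1, h2, by rw [par_add_one hN, h1]; decide⟩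

lemma TB_occ_b (hN : 2 ∣ N) {a b : V} {q : ZMod N} (h : TB g a b q) :
    ∃ p, g p = b ∧ par p = 1 := by
  rcases h with ⟨h1, _, h3⟩ | ⟨h1, _, h3⟩
  · exact ⟨q + 1, h3, by rw [par_add_one hN, h1]; decide⟩
  · exact ⟨q, h3, h1⟩

lemma TB_same (hinj : Function.Injective g) (h2 : (2 : ZMod N) ≠ 0) {a b : V} {q q' : ZMod N}
    (h : TB g a b q) (h' : TB g a b q') : q = q' := by
  rcases h with ⟨_, ha, hb⟩ | ⟨_, ha, hb⟩ <;> rcases h' with ⟨_, ha', hb'⟩ | ⟨_, ha', hb'⟩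
  · exact hinj (ha.trans ha'.symm)
  · exfalso
    have e1 : q = q' + 1 := hinj (ha.trans ha'.symm)
    have e2 : q + 1 = q' := hinj (hb.trans hb'.symm)
    apply h2
    linear_combination e2 - e1
  · exfalso
    have e1 : q + 1 = q' := hinj (ha.trans ha'.symm)
    have e2 : q = q' + 1 := hinj (hb.trans hb'.symm)
    apply h2
    linear_combination e1 - e2
  · exact hinj (hb.trans hb'.symm)

lemma TB_conf (hN : 2 ∣ N) (hinj : Function.Injective g) {a b a' b' : V} {q q' : ZMod N}
    (h : TB g a b q) (h' : TB g a' b' q') (hc : b = a' ∨ b' = a) : False := by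
  rcases hc with hc | hc
  · obtain ⟨p, hp, hp0⟩ := TB_occ_b g hN h
    obtain ⟨p', hp', hp'0⟩ := TB_occ_a g hN h'
    rw [← hc] at hp'
    have : p = p' := hinj (hp.trans hp'.symm)
    rw [this, hp'0] at hp0
    exact absurd hp0 (by decide)
  · obtain ⟨p, hp, hp0⟩ := TB_occ_a g hN h
    obtain ⟨p', hp', hp'0⟩ := TB_occ_b g hN h'
    rw [hc] at hp'
    have : p = p' := hinj (hp.trans hp'.symm)
    rw [this, hp'0] at hp0
    exact absurd hp0 (by decide)

lemma TB_uniq (hN : 2 ∣ N) (hinj : Function.Injective g) (h2 : (2 : ZMod N) ≠ 0)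
    {a₁ b₁ a₂ b₂ a₃ b₃ : V} {q q' : ZMod N}
    (h12 : (a₁ = a₂ ∧ b₁ = b₂) ∨ b₁ = a₂ ∨ b₂ = a₁)
    (h13 : (a₁ = a₃ ∧ b₁ = b₃) ∨ b₁ = a₃ ∨ b₃ = a₁)
    (h23 : (a₂ = a₃ ∧ b₂ = b₃) ∨ b₂ = a₃ ∨ b₃ = a₂)
    (h : TB g a₁ b₁ q ∨ TB g a₂ b₂ q ∨ TB g a₃ b₃ q)
    (h' : TB g a₁ b₁ q' ∨ TB g a₂ b₂ q' ∨ TB g a₃ b₃ q') : q = q' := by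
  have key : ∀ (a b a' b' : V) (r r' : ZMod N),
      ((a = a' ∧ b = b') ∨ b = a' ∨ b' = a) →
      TB g a b r → TB g a' b' r' → r = r' := by
    rintro a b a' b' r r' (⟨rfl, rfl⟩ | hc) ht ht'
    · exact TB_same g hinj h2 ht ht'
    · exact (TB_conf g hN hinj ht ht' hc).elim
  have perm : ∀ (u v u' v' : V), ((u = u' ∧ v = v') ∨ v = u' ∨ v' = u) →
      ((u' = u ∧ v' = v) ∨ v' = u ∨ v = u') := by
    rintro u v u' v' (⟨x, y⟩ | hx | hx)
    · exact Or.inl ⟨x.symm, y.symm⟩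
    · exact Or.inr (Or.inr hx)
    · exact Or.inr (Or.inl hx)
  have h12' := perm _ _ _ _ h12
  have h13' := perm _ _ _ _ h13
  have h23' := perm _ _ _ _ h23
  rcases h with h | h | h <;> rcases h' with h' | h' | h'
  · exact TB_same g hinj h2 h h'
  · exact key _ _ _ _ _ _ h12 h h'
  · exact key _ _ _ _ _ _ h13 h h'
  · exact key _ _ _ _ _ _ h12' h h'
  · exact TB_same g hinj h2 h h'
  · exact key _ _ _ _ _ _ h23 h h'
  · exact key _ _ _ _ _ _ h13' h h'
  · exact key _ _ _ _ _ _ h23' h h'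
  · exact TB_same g hinj h2 h h'

end TBsec

/-! ### The general no-ADHC criterion -/

theorem no_adhc {V : Type*} (E : V → V → Prop) (n : ℕ) (hn : 2 ≤ n)
    (β : V → ZMod 2 → ZMod 2)
    (a₁ b₁ a₂ b₂ a₃ b₃ w w' : V)
    (Hpres : ∀ u v, E u v → β u 0 ≠ β v 1 →
      (u = a₁ ∧ v = b₁) ∨ (u = a₂ ∧ v = b₂) ∨ (u = a₃ ∧ v = b₃))
    (hw : ∀ r, β w r = 1) (hw' : ∀ r, β w' r = 0)
    (h12 : (a₁ = a₂ ∧ b₁ = b₂) ∨ b₁ = a₂ ∨ b₂ = a₁)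
    (h13 : (a₁ = a₃ ∧ b₁ = b₃) ∨ b₁ = a₃ ∨ b₃ = a₁)
    (h23 : (a₂ = a₃ ∧ b₂ = b₃) ∨ b₂ = a₃ ∨ b₃ = a₂) :
    ¬ HasADHC E n := by
  rintro ⟨g, hg, hE⟩
  haveI : NeZero (2 * n) := ⟨by omega⟩
  have hN : 2 ∣ 2 * n := ⟨n, rfl⟩
  have h2z : (2 : ZMod (2 * n)) ≠ 0 := by
    intro h
    have : ((2 : ℕ) : ZMod (2 * n)) = 0 := by exact_mod_cast h
    have := Nat.le_of_dvd (by norm_num) ((ZMod.natCast_eq_zero_iff 2 (2 * n)).mp this)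
    omega
  have hinj := hg.1
  set c : ZMod (2 * n) → ZMod 2 := fun q => β (g q) (par q) with hc
  have hstep : ∀ q : ZMod (2 * n), c (q + 1) ≠ c q →
      TB g a₁ b₁ q ∨ TB g a₂ b₂ q ∨ TB g a₃ b₃ q := by
    intro q hq
    have hpar2 : ∀ r : ZMod 2, r = 0 ∨ r = 1 := by decide
    rcases hpar2 (par q) with h0 | h1
    · obtain ⟨j, hj⟩ := par_even hN q h0
      have hEq : E (g q) (g (q + 1)) := by rw [hj]; exact (hE j).1
      have hne : β (g q) 0 ≠ β (g (q + 1)) 1 := by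
        intro h
        apply hq
        show β (g (q + 1)) (par (q + 1)) = β (g q) (par q)
        rw [par_add_one hN, h0]
        have e : ((0 : ZMod 2) + 1) = 1 := rfl
        rw [e, h]
      rcases Hpres _ _ hEq hne with ⟨hu, hv⟩ | ⟨hu, hv⟩ | ⟨hu, hv⟩
      · exact Or.inl (Or.inl ⟨h0, hu, hv⟩)
      · exact Or.inr (Or.inl (Or.inl ⟨h0, hu, hv⟩))
      · exact Or.inr (Or.inr (Or.inl ⟨h0, hu, hv⟩))
    · obtain ⟨j, hj⟩ := par_odd hN q h1
      have hEq : E (g (q + 1)) (g q) := by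
        have h2 : q + 1 = 2 * j + 2 := by rw [hj]; ring
        rw [h2, hj]
        exact (hE j).2
      have hne : β (g (q + 1)) 0 ≠ β (g q) 1 := by
        intro h
        apply hq
        show β (g (q + 1)) (par (q + 1)) = β (g q) (par q)
        rw [par_add_one hN, h1]
        have e : ((1 : ZMod 2) + 1) = 0 := rfl
        rw [e, h]
      rcases Hpres _ _ hEq hne with ⟨hu, hv⟩ | ⟨hu, hv⟩ | ⟨hu, hv⟩
      · exact Or.inl (Or.inr ⟨h1, hu, hv⟩)
      · exact Or.inr (Or.inl (Or.inr ⟨h1, hu, hv⟩))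
      · exact Or.inr (Or.inr (Or.inr ⟨h1, hu, hv⟩))
  have walk : ∀ (p : ZMod (2 * n)) (k : ℕ),
      (∀ i : ℕ, i < k → c (p + i + 1) = c (p + i)) → c (p + k) = c p := by
    intro p k
    induction k with
    | zero => intro _; simp
    | succ k ih =>
      intro hstep'
      have h1 : p + ((k + 1 : ℕ) : ZMod (2 * n)) = (p + k) + 1 := by push_cast; ring
      rw [h1, hstep' k (by omega), ih (fun i hi => hstep' i (by omega))]
  by_cases hgood : ∀ q : ZMod (2 * n), c (q + 1) = c q
  · obtain ⟨pw, hpw⟩ := hg.2 w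
    obtain ⟨pw', hpw'⟩ := hg.2 w'
    have key : c pw' = c pw := by
      have h1 : pw + (((pw' - pw).val : ℕ) : ZMod (2 * n)) = pw' := by
        rw [ZMod.natCast_val, ZMod.cast_id]; ring
      rw [← h1]
      exact walk pw _ (fun i _ => hgood _)
    rw [hc] at key
    simp only [hpw, hpw'] at key
    rw [hw, hw'] at key
    exact absurd key (by decide)
  · push_neg at hgood
    obtain ⟨q₀, hq₀⟩ := hgood
    have hbad₀ := hstep q₀ hq₀
    have hgood' : ∀ q : ZMod (2 * n), q ≠ q₀ → c (q + 1) = c q := by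
      intro q hq
      by_contra hcq
      exact hq (TB_uniq g hN hinj h2z h12 h13 h23 (hstep q hcq) hbad₀)
    have hwrap : c (q₀ + 1 + ((2 * n - 1 : ℕ) : ZMod (2 * n))) = c (q₀ + 1) := by
      apply walk
      intro i hi
      apply hgood'
      intro hcon
      have : ((1 + i : ℕ) : ZMod (2 * n)) = 0 := by
        push_cast
        linear_combination hcon
      have := Nat.le_of_dvd (by omega)
        ((ZMod.natCast_eq_zero_iff (1 + i) (2 * n)).mp this)
      omega
    have hq0 : q₀ + 1 + ((2 * n - 1 : ℕ) : ZMod (2 * n)) = q₀ := by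
      have h1 : ((1 + (2 * n - 1) : ℕ) : ZMod (2 * n)) = 0 := by
        have : 1 + (2 * n - 1) = 2 * n := by omega
        rw [this, ZMod.natCast_self]
      push_cast at h1 ⊢
      linear_combination h1
    rw [hq0] at hwrap
    exact hq₀ hwrap.symm

/-! ### The block colouring of `FVert` -/

/-- block colouring: second argument is the "role" (0 = source, 1 = sink). -/
def blk {m : ℕ} : FVert m → ZMod 2 → ZMod 2
  | Sum.inl p, r => (p.1.val : ZMod 2) + r
  | Sum.inr i, _ => (i.val : ZMod 2) + 1

lemma blk_base {m : ℕ} (u v : FVert m) (h : adjBase m u v) : blk u 0 = blk v 1 := by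
  rcases u with ⟨i, a⟩ | i <;> rcases v with ⟨j, b⟩ | j
  · have h' : i ≠ j := h
    show (i.val : ZMod 2) + 0 = (j.val : ZMod 2) + 1
    fin_cases i <;> fin_cases j <;> simp_all <;> rfl
  · have h' : i ≠ j := h
    show (i.val : ZMod 2) + 0 = (j.val : ZMod 2) + 1
    fin_cases i <;> fin_cases j <;> simp_all <;> rfl
  · have h' : i = j := h
    subst h'
    rfl
  · exact absurd h (by simp [adjBase])

lemma Hpres_F1 {m : ℕ} (u v : FVert m) (h : adjF1 m u v) (hne : blk u 0 ≠ blk v 1) :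
    (u = Sum.inr 0 ∧ v = Sum.inr 1) ∨ (u = Sum.inr 1 ∧ v = Sum.inr 0) ∨
      (u = Sum.inr 1 ∧ v = Sum.inr 0) := by
  rcases u with ⟨i, a⟩ | i <;> rcases v with ⟨j, b⟩ | j
  · exact absurd (blk_base _ _ (show adjBase m (Sum.inl (i,a)) (Sum.inl (j,b)) from h)) hne
  · exact absurd (blk_base _ _ (show adjBase m (Sum.inl (i,a)) (Sum.inr j) from h)) hne
  · exact absurd (blk_base _ _ (show adjBase m (Sum.inr i) (Sum.inl (j,b)) from h)) hne
  · have h' : i ≠ j := h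
    fin_cases i <;> fin_cases j
    · exact absurd rfl h'
    · exact Or.inl ⟨rfl, rfl⟩
    · exact Or.inr (Or.inl ⟨rfl, rfl⟩)
    · exact absurd rfl h'

lemma Hpres_F2 {m : ℕ} (x : Fin m) (u v : FVert m) (h : adjF2 m x u v)
    (hne : blk u 0 ≠ blk v 1) :
    (u = Sum.inr 0 ∧ v = Sum.inr 1) ∨ (u = Sum.inr 1 ∧ v = Sum.inl (0, x)) ∨
      (u = Sum.inl (0, x) ∧ v = Sum.inr 0) := by
  rcases h with h | h | h | h
  · exact absurd (blk_base _ _ h) hne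
  · exact Or.inl h
  · exact Or.inr (Or.inl h)
  · exact Or.inr (Or.inr h)

/-! ### The main theorem -/

theorem statement3_aux (m : ℕ) (hn : 2 ≤ m + 1) :
    ((∀ v, m + 1 ≤ outDeg (adjF1 m) v ∧ m + 1 ≤ inDeg (adjF1 m) v) ∧
      (∃ v, outDeg (adjF1 m) v = m + 1 ∨ inDeg (adjF1 m) v = m + 1) ∧
      ¬ HasADHC (adjF1 m) (m + 1)) ∧
    (∀ x : Fin m,
      (∀ v, m + 1 ≤ outDeg (adjF2 m x) v ∧ m + 1 ≤ inDeg (adjF2 m x) v) ∧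
      (∃ v, outDeg (adjF2 m x) v = m + 1 ∨ inDeg (adjF2 m x) v = m + 1) ∧
      ¬ HasADHC (adjF2 m x) (m + 1)) := by
  constructor
  · refine ⟨fun v => ⟨le_of_eq (outDeg_F1 v).symm, le_of_eq (inDeg_F1 v).symm⟩,
      ⟨Sum.inr 0, Or.inl (outDeg_F1 _)⟩, ?_⟩
    exact no_adhc (adjF1 m) (m + 1) hn blk (Sum.inr 0) (Sum.inr 1) (Sum.inr 1) (Sum.inr 0)
      (Sum.inr 1) (Sum.inr 0) (Sum.inr 0) (Sum.inr 1) Hpres_F1 (fun _ => rfl) (fun _ => rfl)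
      (Or.inr (Or.inl rfl)) (Or.inr (Or.inl rfl)) (Or.inl ⟨rfl, rfl⟩)
  · intro x
    refine ⟨?_, ⟨Sum.inr 0, Or.inl (outDeg_F2_y1 x)⟩, ?_⟩
    · rintro (⟨i, a⟩ | i)
      · constructor
        · calc m + 1 = outDeg (adjBase m) (Sum.inl (i,a)) := (outDeg_base_inl i a).symm
            _ ≤ outDeg (adjF2 m x) (Sum.inl (i,a)) :=
              Set.ncard_le_ncard (fun w hw => Or.inl hw) (Set.toFinite _)
        · calc m + 1 = inDeg (adjBase m) (Sum.inl (i,a)) := (inDeg_base_inl i a).symm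
            _ ≤ inDeg (adjF2 m x) (Sum.inl (i,a)) :=
              Set.ncard_le_ncard (fun w hw => Or.inl hw) (Set.toFinite _)
      · fin_cases i
        · exact ⟨le_of_eq (outDeg_F2_y1 x).symm, le_of_eq (inDeg_F2_y1 x).symm⟩
        · exact ⟨le_of_eq (outDeg_F2_y2 x).symm, le_of_eq (inDeg_F2_y2 x).symm⟩
    · exact no_adhc (adjF2 m x) (m + 1) hn blk (Sum.inr 0) (Sum.inr 1) (Sum.inr 1)
        (Sum.inl (0, x)) (Sum.inl (0, x)) (Sum.inr 0) (Sum.inr 0) (Sum.inr 1) (Hpres_F2 x)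
        (fun _ => rfl) (fun _ => rfl)
        (Or.inr (Or.inl rfl)) (Or.inr (Or.inr rfl)) (Or.inr (Or.inl rfl))

theorem statement3 (n : ℕ) (hn : 2 ≤ n) :
    ((∀ v, n ≤ outDeg (adjF1 (n - 1)) v ∧ n ≤ inDeg (adjF1 (n - 1)) v) ∧
      (∃ v, outDeg (adjF1 (n - 1)) v = n ∨ inDeg (adjF1 (n - 1)) v = n) ∧
      ¬ HasADHC (adjF1 (n - 1)) n) ∧
    (∀ x : Fin (n - 1),
      (∀ v, n ≤ outDeg (adjF2 (n - 1) x) v ∧ n ≤ inDeg (adjF2 (n - 1) x) v) ∧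
      (∃ v, outDeg (adjF2 (n - 1) x) v = n ∨ inDeg (adjF2 (n - 1) x) v = n) ∧
      ¬ HasADHC (adjF2 (n - 1) x) n) := by
  obtain ⟨m, rfl⟩ : ∃ m, n = m + 1 := ⟨n - 1, by omega⟩
  exact statement3_aux m hn
end

section
/- Let D be a directed graph, let c > 0, and let X, Y ⊆ V(D) be nonempty sets with e⃗(X, Y) ≥ c·|X|·|Y|. Then there exist nonempty sets X′ ⊆ X and Y′ ⊆ Y with X′ ∩ Y′ = ∅ such that every vertex of X′ has at least (c/8)·|Y| out-neighbors in Y′ and every vertex of Y′ has at least (c/8)·|X| in-neighbors in X′. -/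
/-- The number of directed edges from `A` to `B`. -/
noncomputable def dirEdges {V : Type*} (E : V → V → Prop) (A B : Set V) : ℕ :=
  {p : V × V | p.1 ∈ A ∧ p.2 ∈ B ∧ E p.1 p.2}.ncard

/-!
Split `X ∩ Y` at random between the two sides: an edge `(u, v)` of `X × Y` (so `u ≠ v`) goes from
`(X \ Y) ∪ S` to `(Y \ X) ∪ (X ∩ Y \ S)` for at least a quarter of the sets `S ⊆ X ∩ Y`, so some
disjoint `A₀ ⊆ X`, `B₀ ⊆ Y` carry a quarter of the edges from `X` to `Y`. Then maximise the surplus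
`e(A, B) - (c/8) (|Y| |A| + |X| |B|)` over `A ⊆ A₀`, `B ⊆ B₀`: deleting a vertex of too small degree
would increase it, and since the surplus of `(A₀, B₀)` is nonnegative while that of a pair with an
empty side is not positive, a maximiser with both sides nonempty exists.
-/

open Finset

theorem Finset.two_pow_card_le_four_mul_card_filter_powerset {V : Type*} [DecidableEq V]
    (Z : Finset V) {u v : V} (huv : u ≠ v) :
    2 ^ #Z ≤ 4 * #{S ∈ Z.powerset | (u ∈ Z → u ∈ S) ∧ v ∉ S} := by
  set L : Finset V := {x ∈ Z | x = u}
  set U := Z.erase v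
  have hLU : L ⊆ U := fun x hx => by
    obtain ⟨hxZ, rfl⟩ := mem_filter.1 hx
    exact mem_erase.2 ⟨huv, hxZ⟩
  have hsub : Icc L U ⊆ {S ∈ Z.powerset | (u ∈ Z → u ∈ S) ∧ v ∉ S} := fun S hS => by
    obtain ⟨hLS, hSU⟩ := mem_Icc.1 hS
    refine mem_filter.2 ⟨mem_powerset.2 (hSU.trans (erase_subset v Z)), fun hu => hLS ?_,
      fun hv => (notMem_erase v Z) (hSU hv)⟩
    exact mem_filter.2 ⟨hu, rfl⟩
  have hL : #L ≤ 1 := card_le_one.2 fun x hx y hy => by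
    rw [(mem_filter.1 hx).2, (mem_filter.1 hy).2]
  have hU : #Z ≤ #U + 1 := by
    have : #Z - 1 ≤ #U := pred_card_le_card_erase
    omega
  calc 2 ^ #Z ≤ 2 ^ (#U - #L + 2) := Nat.pow_le_pow_right two_pos (by omega)
    _ = 4 * #(Icc L U) := by rw [card_Icc_finset hLU, pow_add]; ring
    _ ≤ _ := Nat.mul_le_mul_left 4 (card_le_card hsub)

theorem Finset.ncard_sep_coe {V : Type*} (s : Finset V) (p : V → Prop) [DecidablePred p] :
    {x ∈ (s : Set V) | p x}.ncard = #{x ∈ s | p x} := by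
  rw [← Set.ncard_coe_finset, coe_filter]
  rfl

namespace Rel

variable {V : Type*} (r : V → V → Prop) [DecidableRel r]

theorem card_interedges_eq_sum_left (s t : Finset V) :
    #(interedges r s t) = ∑ a ∈ s, #{b ∈ t | r a b} := by
  simp only [interedges, card_filter, sum_product]

theorem card_interedges_eq_sum_right (s t : Finset V) :
    #(interedges r s t) = ∑ b ∈ t, #{a ∈ s | r a b} := by
  simp only [interedges, card_filter, sum_product_right]

theorem nonempty_and_nonempty_of_interedges_nonempty {A B : Finset V}
    (h : (interedges r A B).Nonempty) : A.Nonempty ∧ B.Nonempty := by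
  obtain ⟨e, he⟩ := h
  obtain ⟨hA, hB, -⟩ := mem_interedges_iff.1 he
  exact ⟨⟨e.1, hA⟩, ⟨e.2, hB⟩⟩

variable [DecidableEq V]

theorem card_interedges_erase_left {s : Finset V} {a : V} (ha : a ∈ s) (t : Finset V) :
    #(interedges r s t) = #(interedges r (s.erase a) t) + #{b ∈ t | r a b} := by
  rw [card_interedges_eq_sum_left, card_interedges_eq_sum_left, sum_erase_add _ _ ha]

theorem card_interedges_erase_right (s : Finset V) {t : Finset V} {b : V} (hb : b ∈ t) :
    #(interedges r s t) = #(interedges r s (t.erase b)) + #{a ∈ s | r a b} := by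
  rw [card_interedges_eq_sum_right, card_interedges_eq_sum_right, sum_erase_add _ _ hb]

theorem exists_disjoint_card_interedges_le_four_mul (hr : ∀ v, ¬ r v v) (X Y : Finset V) :
    ∃ A ⊆ X, ∃ B ⊆ Y, Disjoint A B ∧ #(interedges r X Y) ≤ 4 * #(interedges r A B) := by
  set Z := X ∩ Y
  set good : V × V → Finset V → Prop := fun e S => (e.1 ∈ Z → e.1 ∈ S) ∧ e.2 ∉ S
  have hgood : ∀ S ∈ Z.powerset, {e ∈ interedges r X Y | good e S} ⊆
      interedges r (X \ Y ∪ S) (Y \ X ∪ (Z \ S)) := by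
    intro S hS e he
    simp only [good, Z, mem_filter, mem_interedges_iff, mem_union, mem_sdiff, mem_inter] at he ⊢
    tauto
  have hcount : #(interedges r X Y) * 2 ^ #Z ≤
      ∑ S ∈ Z.powerset, 4 * #(interedges r (X \ Y ∪ S) (Y \ X ∪ (Z \ S))) :=
    calc #(interedges r X Y) * 2 ^ #Z = ∑ e ∈ interedges r X Y, 2 ^ #Z := by
          rw [sum_const, smul_eq_mul]
      _ ≤ ∑ e ∈ interedges r X Y, 4 * #{S ∈ Z.powerset | good e S} := by
          refine sum_le_sum fun e he => ?_
          have hne : e.1 ≠ e.2 := fun h => hr e.1 (h ▸ (mem_interedges_iff.1 he).2.2)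
          exact Z.two_pow_card_le_four_mul_card_filter_powerset hne
      _ = 4 * ∑ S ∈ Z.powerset, #{e ∈ interedges r X Y | good e S} := by
          simp_rw [← mul_sum, card_filter]
          exact congrArg _ sum_comm
      _ ≤ ∑ S ∈ Z.powerset, 4 * #(interedges r (X \ Y ∪ S) (Y \ X ∪ (Z \ S))) := by
          rw [mul_sum]
          exact sum_le_sum fun S hS => Nat.mul_le_mul_left 4 (card_le_card (hgood S hS))
  obtain ⟨S, hS, hle⟩ := exists_le_of_sum_le ⟨∅, empty_mem_powerset Z⟩
    (f := fun _ => #(interedges r X Y))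
    (g := fun S => 4 * #(interedges r (X \ Y ∪ S) (Y \ X ∪ (Z \ S))))
    (by rwa [sum_const, card_powerset, smul_eq_mul, mul_comm])
  have hSZ : S ⊆ Z := mem_powerset.1 hS
  refine ⟨X \ Y ∪ S, union_subset sdiff_subset (hSZ.trans inter_subset_left),
    Y \ X ∪ (Z \ S), union_subset sdiff_subset (sdiff_subset.trans inter_subset_right), ?_, hle⟩
  rw [disjoint_left]
  intro a haA haB
  have haZ := @hSZ a
  simp only [Z, mem_union, mem_sdiff, mem_inter] at haA haB haZ
  tauto

section Surplus

variable (α β : ℝ)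

def surplus (A B : Finset V) : ℝ := #(interedges r A B) - (α * #A + β * #B)

theorem surplus_erase_left {A : Finset V} {a : V} (ha : a ∈ A) (B : Finset V) :
    surplus r α β (A.erase a) B = surplus r α β A B - #{b ∈ B | r a b} + α := by
  rw [surplus, surplus, card_interedges_erase_left r ha, ← card_erase_add_one ha]
  push_cast
  ring

theorem surplus_erase_right (A : Finset V) {B : Finset V} {b : V} (hb : b ∈ B) :
    surplus r α β A (B.erase b) = surplus r α β A B - #{a ∈ A | r a b} + β := by
  rw [surplus, surplus, card_interedges_erase_right r A hb, ← card_erase_add_one hb]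
  push_cast
  ring

theorem min_degree_of_forall_surplus_le {A₀ B₀ A B : Finset V} (hA : A ⊆ A₀) (hB : B ⊆ B₀)
    (hmax : ∀ A' ⊆ A₀, ∀ B' ⊆ B₀, surplus r α β A' B' ≤ surplus r α β A B) :
    (∀ a ∈ A, α ≤ #{b ∈ B | r a b}) ∧ ∀ b ∈ B, β ≤ #{a ∈ A | r a b} := by
  constructor
  · intro a ha
    have := hmax _ ((erase_subset a A).trans hA) B hB
    rw [surplus_erase_left r α β ha] at this
    linarith
  · intro b hb
    have := hmax A hA _ ((erase_subset b B).trans hB)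
    rw [surplus_erase_right r α β A hb] at this
    linarith

theorem exists_nonempty_min_degree {A₀ B₀ : Finset V} (hα : 0 ≤ α) (hβ : 0 ≤ β)
    (h₀ : 0 ≤ surplus r α β A₀ B₀) (hne : (interedges r A₀ B₀).Nonempty) :
    ∃ A ⊆ A₀, ∃ B ⊆ B₀, A.Nonempty ∧ B.Nonempty ∧
      (∀ a ∈ A, α ≤ #{b ∈ B | r a b}) ∧ ∀ b ∈ B, β ≤ #{a ∈ A | r a b} := by
  obtain ⟨p, hp, hmax⟩ := exists_max_image (A₀.powerset ×ˢ B₀.powerset)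
    (fun p => surplus r α β p.1 p.2) ⟨(A₀, B₀), by simp⟩
  rw [mem_product, mem_powerset, mem_powerset] at hp
  have hmax' : ∀ A' ⊆ A₀, ∀ B' ⊆ B₀, surplus r α β A' B' ≤ surplus r α β p.1 p.2 :=
    fun A' hA' B' hB' => hmax (A', B') (by simp [hA', hB'])
  by_cases hp_ne : (interedges r p.1 p.2).Nonempty
  · obtain ⟨hA, hB⟩ := nonempty_and_nonempty_of_interedges_nonempty r hp_ne
    exact ⟨p.1, hp.1, p.2, hp.2, hA, hB, min_degree_of_forall_surplus_le r α β hp.1 hp.2 hmax'⟩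
  · -- the maximal surplus is then `≤ 0`, so it is also attained at `(A₀, B₀)`
    have hp_le : surplus r α β p.1 p.2 ≤ 0 := by
      rw [not_nonempty_iff_eq_empty] at hp_ne
      simp only [surplus, hp_ne, card_empty, Nat.cast_zero, zero_sub, neg_nonpos]
      positivity
    obtain ⟨hA₀, hB₀⟩ := nonempty_and_nonempty_of_interedges_nonempty r hne
    exact ⟨A₀, subset_rfl, B₀, subset_rfl, hA₀, hB₀,
      min_degree_of_forall_surplus_le r α β subset_rfl subset_rfl
        fun A' hA' B' hB' => (hmax' A' hA' B' hB').trans (hp_le.trans h₀)⟩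

end Surplus

end Rel

theorem dirEdges_coe {V : Type*} (E : V → V → Prop) [DecidableRel E] (A B : Finset V) :
    dirEdges E ↑A ↑B = #(Rel.interedges E A B) := by
  rw [dirEdges, ← Set.ncard_coe_finset]
  congr 1
  ext p
  simp [Rel.mem_interedges_iff]

theorem statement7 (V : Type) [Finite V] (E : V → V → Prop) (hloop : ∀ v, ¬ E v v)
    (c : ℝ) (hc : 0 < c) (X Y : Set V) (hX : X.Nonempty) (hY : Y.Nonempty)
    (he : c * (X.ncard : ℝ) * (Y.ncard : ℝ) ≤ (dirEdges E X Y : ℝ)) :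
    ∃ X' Y' : Set V, X' ⊆ X ∧ Y' ⊆ Y ∧ X'.Nonempty ∧ Y'.Nonempty ∧
      Disjoint X' Y' ∧
      (∀ x ∈ X', c / 8 * (Y.ncard : ℝ) ≤ ({y ∈ Y' | E x y}.ncard : ℝ)) ∧
      (∀ y ∈ Y', c / 8 * (X.ncard : ℝ) ≤ ({x ∈ X' | E x y}.ncard : ℝ)) := by
  classical
  obtain ⟨X, rfl⟩ := X.toFinite.exists_finset_coe
  obtain ⟨Y, rfl⟩ := Y.toFinite.exists_finset_coe
  rw [Set.ncard_coe_finset, Set.ncard_coe_finset, dirEdges_coe] at he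
  rw [coe_nonempty] at hX hY
  obtain ⟨A₀, hA₀, B₀, hB₀, hdisj, hsplit⟩ :=
    Rel.exists_disjoint_card_interedges_le_four_mul E hloop X Y
  have hsplit' : (#(Rel.interedges E X Y) : ℝ) ≤ 4 * #(Rel.interedges E A₀ B₀) := by
    exact_mod_cast hsplit
  have hA₀card : (#A₀ : ℝ) ≤ #X := by exact_mod_cast card_le_card hA₀
  have hB₀card : (#B₀ : ℝ) ≤ #Y := by exact_mod_cast card_le_card hB₀
  have hXY : 0 < c * #X * #Y := by have := hX.card_pos; have := hY.card_pos; positivity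
  have hsurplus : 0 ≤ Rel.surplus E (c / 8 * #Y) (c / 8 * #X) A₀ B₀ := by
    have hA : c / 8 * #Y * #A₀ ≤ c / 8 * #Y * #X := by gcongr
    have hB : c / 8 * #X * #B₀ ≤ c / 8 * #X * #Y := by gcongr
    rw [Rel.surplus]
    linarith
  have hpos : 0 < #(Rel.interedges E A₀ B₀) := by
    have : (0 : ℝ) < #(Rel.interedges E A₀ B₀) := by linarith
    exact_mod_cast this
  obtain ⟨A, hA, B, hB, hAne, hBne, hout, hin⟩ :=
    Rel.exists_nonempty_min_degree E (A₀ := A₀) (B₀ := B₀) (c / 8 * #Y) (c / 8 * #X)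
      (by positivity) (by positivity) hsurplus (card_pos.1 hpos)
  refine ⟨A, B, coe_subset.2 (hA.trans hA₀), coe_subset.2 (hB.trans hB₀), coe_nonempty.2 hAne,
    coe_nonempty.2 hBne, disjoint_coe.2 (hdisj.mono hA hB), fun x hx => ?_, fun y hy => ?_⟩
  · rw [ncard_sep_coe, Set.ncard_coe_finset]
    exact hout x hx
  · rw [ncard_sep_coe, Set.ncard_coe_finset]
    exact hin y hy
end

section
/- Let D be a directed graph, let c > 0, and let X, Y ⊆ V(D) be nonempty sets with e⃗(X, Y) ≥ c·|X|·|Y|. Then the subgraph of D induced on X ∪ Y contains a proper anti-directed path on at least (c/4)·min{|X|, |Y|} vertices. -/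
/-- `f 0, f 1, …, f (2m-1)` is a proper anti-directed path in `E`:
the vertices are distinct and the even-indexed vertices are sources. -/
def ProperADP {V : Type*} (E : V → V → Prop) (m : ℕ) (f : ℕ → V) : Prop :=
  0 < m ∧
  (∀ i j, i < 2 * m → j < 2 * m → f i = f j → i = j) ∧
  ∀ j, 2 * j + 1 < 2 * m →
    E (f (2 * j)) (f (2 * j + 1)) ∧
      (2 * j + 2 < 2 * m → E (f (2 * j + 2)) (f (2 * j + 1)))

open Set Function

section EdgeCounts

variable {V : Type*} (E : V → V → Prop)

lemma dirEdges_flip (A B : Set V) : dirEdges (flip E) B A = dirEdges E A B := by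
  have h : {p : V × V | p.1 ∈ B ∧ p.2 ∈ A ∧ flip E p.1 p.2} =
      Prod.swap '' {p | p.1 ∈ A ∧ p.2 ∈ B ∧ E p.1 p.2} := by
    ext ⟨x, y⟩
    simp only [flip, mem_ofPred_eq, image_swap_eq_preimage_swap, mem_preimage, Prod.fst_swap,
      Prod.snd_swap]
    tauto
  rw [dirEdges, h, ncard_image_of_injective _ Prod.swap_injective, dirEdges]

lemma dirEdges_singleton_left (a : V) (B : Set V) :
    dirEdges E {a} B = {b ∈ B | E a b}.ncard := by
  have h : {p : V × V | p.1 ∈ ({a} : Set V) ∧ p.2 ∈ B ∧ E p.1 p.2} =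
      Prod.mk a '' {b ∈ B | E a b} := by
    ext ⟨x, y⟩
    simp only [mem_ofPred_eq, mem_singleton_iff, mem_image, Prod.mk.injEq]
    constructor
    · rintro ⟨rfl, hy, hxy⟩
      exact ⟨y, ⟨hy, hxy⟩, rfl, rfl⟩
    · rintro ⟨b, ⟨hb, hab⟩, rfl, rfl⟩
      exact ⟨rfl, hb, hab⟩
  rw [dirEdges, h, ncard_image_of_injective _ (Prod.mk_right_injective a)]

lemma dirEdges_singleton_right (A : Set V) (b : V) :
    dirEdges E A {b} = {a ∈ A | E a b}.ncard := by
  rw [← dirEdges_flip, dirEdges_singleton_left]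
  rfl

lemma nonempty_left_of_dirEdges_pos {A B : Set V} (h : 0 < dirEdges E A B) : A.Nonempty := by
  obtain ⟨p, hp, -⟩ := nonempty_of_ncard_ne_zero h.ne'
  exact ⟨p.1, hp⟩

variable [Finite V]

lemma dirEdges_eq_singleton_add_diff_left {A : Set V} {a : V} (ha : a ∈ A) (B : Set V) :
    dirEdges E A B = dirEdges E {a} B + dirEdges E (A \ {a}) B := by
  unfold dirEdges
  rw [← ncard_union_eq]
  · congr 1
    ext ⟨x, y⟩
    simp only [mem_ofPred_eq, mem_union, mem_singleton_iff, mem_sdiff]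
    by_cases hx : x = a
    · subst hx; tauto
    · tauto
  · rw [disjoint_left]
    rintro ⟨x, y⟩ ⟨hx, -⟩ ⟨hx', -⟩
    exact hx'.2 hx

lemma dirEdges_eq_singleton_add_diff_right (A : Set V) {B : Set V} {b : V} (hb : b ∈ B) :
    dirEdges E A B = dirEdges E A {b} + dirEdges E A (B \ {b}) := by
  simp only [← dirEdges_flip E A]
  exact dirEdges_eq_singleton_add_diff_left (flip E) hb A

theorem exists_subsets_minDegree_gt (k : ℕ) (A B : Set V)
    (h : k * (A.ncard + B.ncard) < dirEdges E A B) :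
    ∃ A' ⊆ A, ∃ B' ⊆ B, A'.Nonempty ∧ (∀ a ∈ A', k < dirEdges E {a} B') ∧
      ∀ b ∈ B', k < dirEdges E A' {b} := by
  by_cases hA : ∃ a ∈ A, dirEdges E {a} B ≤ k
  · obtain ⟨a, ha, hdeg⟩ := hA
    have hcard := ncard_sdiff_singleton_add_one ha
    have hsplit := dirEdges_eq_singleton_add_diff_left E ha B
    have hk : k * (A.ncard + B.ncard) = k * ((A \ {a}).ncard + B.ncard) + k := by
      rw [← hcard]; ring
    obtain ⟨A', hA', B', hB', hAB'⟩ := exists_subsets_minDegree_gt k (A \ {a}) B (by omega)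
    exact ⟨A', hA'.trans sdiff_subset, B', hB', hAB'⟩
  by_cases hB : ∃ b ∈ B, dirEdges E A {b} ≤ k
  · obtain ⟨b, hb, hdeg⟩ := hB
    have hcard := ncard_sdiff_singleton_add_one hb
    have hsplit := dirEdges_eq_singleton_add_diff_right E A hb
    have hk : k * (A.ncard + B.ncard) = k * (A.ncard + (B \ {b}).ncard) + k := by
      rw [← hcard]; ring
    obtain ⟨A', hA', B', hB', hAB'⟩ := exists_subsets_minDegree_gt k A (B \ {b}) (by omega)
    exact ⟨A', hA', B', hB'.trans sdiff_subset, hAB'⟩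
  push Not at hA hB
  exact ⟨A, subset_rfl, B, subset_rfl, nonempty_left_of_dirEdges_pos E (B := B) (by omega),
    hA, hB⟩
termination_by A.ncard + B.ncard

end EdgeCounts

theorem exists_injOn_path_of_minDegree {V : Type*} [Finite V] (S : ℕ → V → V → Prop)
    (P : ℕ → Set V) (d : ℕ) (hirr : ∀ i v, ¬ S i v v)
    (hdeg : ∀ i, ∀ u ∈ P i, d ≤ {w ∈ P (i + 1) | S i u w}.ncard) (h0 : (P 0).Nonempty) :
    ∀ n ≤ d, ∃ f : ℕ → V, (∀ i ≤ n, f i ∈ P i) ∧ InjOn f (Iic n) ∧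
      ∀ i < n, S i (f i) (f (i + 1))
  | 0, _ => ⟨fun _ => h0.some, fun i hi => by simpa [Nat.le_zero.1 hi] using h0.some_mem,
      fun i hi j hj _ => by simp_all, fun i hi => absurd hi i.not_lt_zero⟩
  | n + 1, hn => by
    obtain ⟨f, hP, hinj, hS⟩ := exists_injOn_path_of_minDegree S P d hirr hdeg h0 n (by omega)
    -- `f n` is not its own successor, so only the `n` earlier vertices can block a fresh choice
    have hfresh : (f '' Iio n).ncard < {w ∈ P (n + 1) | S n (f n) w}.ncard :=
      calc (f '' Iio n).ncard ≤ (Iio n).ncard := ncard_image_le (finite_Iio n)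
        _ = n := by simp
        _ < d := hn
        _ ≤ _ := hdeg n (f n) (hP n le_rfl)
    obtain ⟨w, ⟨hwP, hwS⟩, hwf⟩ := exists_mem_notMem_of_ncard_lt_ncard hfresh
    have hwn : w ≠ f n := by rintro h; rw [h] at hwS; exact hirr n _ hwS
    have hw : w ∉ f '' Iic n := by
      rw [← Iio_insert, image_insert_eq]
      exact fun h => h.elim hwn hwf
    have heq : EqOn (update f (n + 1) w) f (Iic n) := fun i hi =>
      update_of_ne (Nat.lt_succ_of_le hi).ne _ _
    refine ⟨update f (n + 1) w, fun i hi => ?_, ?_, fun i hi => ?_⟩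
    · rcases hi.lt_or_eq with hi | rfl
      · rw [heq (Nat.le_of_lt_succ hi)]; exact hP i (Nat.le_of_lt_succ hi)
      · simpa using hwP
    · rw [show Iic (n + 1) = insert (n + 1) (Iic n) from Order.Iic_succ n,
        injOn_insert (by simp), heq.injOn_iff, heq.image_eq, update_self]
      exact ⟨hinj, hw⟩
    · rcases (Nat.lt_succ_iff.1 hi).lt_or_eq with hi | rfl
      · rw [heq hi.le, heq (Nat.succ_le_of_lt hi)]; exact hS i hi
      · rw [update_self, heq (mem_Iic.2 le_rfl)]; exact hwS

theorem exists_properADP_of_minDegree_gt {V : Type*} [Finite V] {E : V → V → Prop}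
    (hloop : ∀ v, ¬ E v v) {k : ℕ} {A B : Set V} (hA : A.Nonempty)
    (hdegA : ∀ a ∈ A, k < dirEdges E {a} B) (hdegB : ∀ b ∈ B, k < dirEdges E A {b}) :
    ∃ m f, ProperADP E m f ∧ (∀ i < 2 * m, f i ∈ A ∪ B) ∧ k + 1 ≤ 2 * m := by
  obtain ⟨f, hP, hinj, hS⟩ := exists_injOn_path_of_minDegree
    (fun i u w => if Even i then E u w else E w u) (fun i => if Even i then A else B) (k + 1)
    (fun i v => by split_ifs <;> exact hloop v)
    (fun i u hu => by
      by_cases hi : Even i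
      · simp only [hi, if_true, Nat.even_add_one, not_true, if_false] at hu ⊢
        exact (dirEdges_singleton_left E u B).symm.trans_ge (hdegA u hu)
      · simp only [hi, if_false, Nat.even_add_one, not_false_eq_true, if_true] at hu ⊢
        exact (dirEdges_singleton_right E A u).symm.trans_ge (hdegB u hu))
    (by simpa using hA) (2 * (k / 2) + 1) (by omega)
  refine ⟨k / 2 + 1, f, ⟨by omega,
    fun i j hi hj hij => hinj (mem_Iic.2 (by omega)) (mem_Iic.2 (by omega)) hij,
    fun j hj => ⟨?_, fun hj' => ?_⟩⟩, fun i hi => ?_, by omega⟩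
  · simpa using hS (2 * j) (by omega)
  · simpa using hS (2 * j + 1) (by omega)
  · have := hP i (by omega)
    split_ifs at this
    exacts [Or.inl this, Or.inr this]

theorem mul_min_le_two_mul_of_mul_mul_le {c x y t : ℝ} (hx : 0 < x) (hy : 0 < y) (ht : 0 ≤ t)
    (h : c * x * y ≤ t * (x + y)) : c * min x y ≤ 2 * t := by
  rcases le_total x y with hxy | hxy
  · rw [min_eq_left hxy]
    nlinarith [mul_le_mul_of_nonneg_left hxy ht]
  · rw [min_eq_right hxy]
    nlinarith [mul_le_mul_of_nonneg_left hxy ht]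

theorem exists_mul_lt_le_succ_mul {e n : ℕ} (he : 0 < e) (hn : 0 < n) :
    ∃ k, k * n < e ∧ e ≤ (k + 1) * n := by
  refine ⟨(e - 1) / n, ?_, ?_⟩
  · have := Nat.div_mul_le_self (e - 1) n
    omega
  · have := Nat.lt_mul_div_succ (e - 1) hn
    rw [mul_comm] at this
    omega

theorem statement8 (V : Type) [Finite V] (E : V → V → Prop) (hloop : ∀ v, ¬ E v v)
    (c : ℝ) (hc : 0 < c) (X Y : Set V) (hX : X.Nonempty) (hY : Y.Nonempty)
    (he : c * (X.ncard : ℝ) * (Y.ncard : ℝ) ≤ (dirEdges E X Y : ℝ)) :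
    ∃ (m : ℕ) (f : ℕ → V), ProperADP E m f ∧
      (∀ i < 2 * m, f i ∈ X ∪ Y) ∧
      c / 4 * min (X.ncard : ℝ) (Y.ncard : ℝ) ≤ (2 * m : ℝ) := by
  have hXc : 0 < X.ncard := hX.ncard_pos
  have hYc : 0 < Y.ncard := hY.ncard_pos
  have he_pos : 0 < dirEdges E X Y := by
    exact_mod_cast (by positivity : (0 : ℝ) < c * X.ncard * Y.ncard).trans_le he
  obtain ⟨k, hk_lt, hk_ge⟩ : ∃ k, k * (X.ncard + Y.ncard) < dirEdges E X Y ∧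
      dirEdges E X Y ≤ (k + 1) * (X.ncard + Y.ncard) :=
    exists_mul_lt_le_succ_mul he_pos (by omega)
  obtain ⟨A, hAX, B, hBY, hA, hdegA, hdegB⟩ := exists_subsets_minDegree_gt E k X Y hk_lt
  obtain ⟨m, f, hf, hfAB, hm⟩ := exists_properADP_of_minDegree_gt hloop hA hdegA hdegB
  refine ⟨m, f, hf, fun i hi => union_subset_union hAX hBY (hfAB i hi), ?_⟩
  have hbound : c * X.ncard * Y.ncard ≤ (2 * m : ℝ) * (X.ncard + Y.ncard) :=
    he.trans (by exact_mod_cast hk_ge.trans (Nat.mul_le_mul_right _ hm))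
  linarith [mul_min_le_two_mul_of_mul_mul_le (by positivity) (by positivity) (by positivity) hbound]
end

section
/- Let m, d be positive integers, let a > 0, let b ∈ (0, a/(2d)), and let c ∈ (0, 2b(a/(2d) − b)). There exists n₀ such that the following holds whenever V is a set of order n ≥ n₀. Suppose that to every m-element subset S of V there is assigned a set f(S) ⊆ V^d; call a tuple T ∈ V^d good if T ∈ f(S) for some m-element subset S of V. If |f(S)| ≥ a·n^d for every m-element subset S of V, then there exists a set 𝓕 of good tuples with |𝓕| ≤ bn/d such that |f(S) ∩ 𝓕| ≥ cn for every m-element subset S of V and the coordinate sets of distinct tuples in 𝓕 are pairwise disjoint. -/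
/-!
Fix θ ∈ (0, 1) and grow F greedily, steering by the pessimistic estimator
Φ(F) = ∑_S θ ^ |f S ∩ F|. While F uses at most b n vertices, every f S keeps at least
p nᵈ tuples avoiding them, p = a - b d, so averaging over those tuples (conditional
expectations) finds one whose addition multiplies Φ by at most r = 1 - p (1 - θ).
After ⌊b n / d⌋ steps Φ ≤ C(n, m) r ^ ⌊b n / d⌋, whereas a single S with |f S ∩ F| < c n
would give Φ ≥ θ ^ (c n). The bound on c gives c < (b / d) p, which leaves room for θ with
r ^ (b / d) < θ ^ c, and then the polynomial factor C(n, m) ≤ nᵐ loses for large n.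
-/
open Finset Filter

section Analysis

lemma one_sub_mul_rpow_lt_rpow {p β c θ : ℝ} (hβ : 0 ≤ β) (hc : 0 ≤ c) (hθ0 : 0 < θ)
    (hθ1 : θ < 1) (hr : 0 < 1 - p * (1 - θ)) (hcθ : c < θ * β * p) :
    (1 - p * (1 - θ)) ^ β < θ ^ c := by
  rw [Real.rpow_def_of_pos hr, Real.rpow_def_of_pos hθ0, Real.exp_lt_exp]
  have hlog_r : Real.log (1 - p * (1 - θ)) ≤ -(p * (1 - θ)) := by
    linarith [Real.log_le_sub_one_of_pos hr]
  have hlog_θ : 1 - θ⁻¹ ≤ Real.log θ := Real.one_sub_inv_le_log_of_pos hθ0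
  have hgap : -(β * (p * (1 - θ))) < c * (1 - θ⁻¹) := by
    have h : c * (1 - θ⁻¹) = -(c / θ * (1 - θ)) := by field_simp; ring
    rw [h, neg_lt_neg_iff, ← mul_assoc]
    have : c / θ < β * p := by rw [div_lt_iff₀ hθ0]; linarith
    exact mul_lt_mul_of_pos_right this (by linarith)
  calc Real.log (1 - p * (1 - θ)) * β ≤ -(p * (1 - θ)) * β :=
        mul_le_mul_of_nonneg_right hlog_r hβ
    _ < c * (1 - θ⁻¹) := by linarith
    _ ≤ Real.log θ * c := by rw [mul_comm]; exact mul_le_mul_of_nonneg_right hlog_θ hc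

lemma exists_one_sub_mul_rpow_lt_rpow {p β c : ℝ} (hβ : 0 ≤ β) (hc : 0 ≤ c) (hp0 : 0 < p)
    (hp1 : p ≤ 1) (hcp : c < β * p) :
    ∃ θ, 0 < θ ∧ θ < 1 ∧ 0 < 1 - p * (1 - θ) ∧ (1 - p * (1 - θ)) ^ β < θ ^ c := by
  obtain ⟨θ, hθc, hθ1⟩ := exists_between ((div_lt_one (by linarith)).2 hcp)
  have hθ0 : 0 < θ := lt_of_le_of_lt (by positivity) hθc
  have hr : 0 < 1 - p * (1 - θ) := by nlinarith
  refine ⟨θ, hθ0, hθ1, hr, one_sub_mul_rpow_lt_rpow hβ hc hθ0 hθ1 hr ?_⟩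
  rw [div_lt_iff₀ (by linarith)] at hθc
  linarith

lemma eventually_choose_mul_pow_floor_lt (m : ℕ) {β c r θ : ℝ} (hr0 : 0 < r)
    (hr1 : r ≤ 1) (hθ : 0 < θ) (h : r ^ β < θ ^ c) :
    ∀ᶠ n : ℕ in atTop, (n.choose m : ℝ) * r ^ ⌊β * n⌋₊ < θ ^ (c * n) := by
  have hθc : 0 < θ ^ c := Real.rpow_pos_of_pos hθ c
  set ρ := r ^ β / θ ^ c
  have hρ : |ρ| < 1 := by
    rw [abs_of_nonneg (by positivity)]
    exact (div_lt_one hθc).2 h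
  filter_upwards [(tendsto_pow_const_mul_const_pow_of_abs_lt_one m hρ).eventually
    (gt_mem_nhds hr0)] with n hn
  have hfloor : r ^ ⌊β * n⌋₊ ≤ (r ^ β) ^ n / r := by
    rw [← Real.rpow_natCast, ← Real.rpow_natCast, ← Real.rpow_mul hr0.le,
      ← Real.rpow_sub_one hr0.ne']
    exact Real.rpow_le_rpow_of_exponent_ge hr0 hr1 (Nat.sub_one_lt_floor _).le
  have hsplit : (r ^ β) ^ n = ρ ^ n * (θ ^ c) ^ n := by
    rw [← mul_pow, div_mul_cancel₀ _ hθc.ne']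
  calc (n.choose m : ℝ) * r ^ ⌊β * n⌋₊ ≤ (n : ℝ) ^ m * ((r ^ β) ^ n / r) := by
        gcongr
        exact_mod_cast Nat.choose_le_pow n m
    _ = (n ^ m * ρ ^ n) / r * (θ ^ c) ^ n := by rw [hsplit]; ring
    _ < 1 * (θ ^ c) ^ n := by
        gcongr
        exact (div_lt_one hr0).2 hn
    _ = θ ^ (c * n) := by rw [one_mul, ← Real.rpow_natCast, ← Real.rpow_mul hθ.le]

end Analysis

section Potential

variable {ι α : Type*}

noncomputable def potential (𝒮 : Finset ι) (f : ι → Set α) (θ : ℝ) (F : Set α) : ℝ :=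
  ∑ S ∈ 𝒮, θ ^ (f S ∩ F).ncard

lemma le_ncard_inter_of_potential_lt {𝒮 : Finset ι} {f : ι → Set α} {θ x : ℝ} {F : Set α}
    (hθ0 : 0 < θ) (hθ1 : θ ≤ 1) (h : potential 𝒮 f θ F < θ ^ x) {S : ι} (hS : S ∈ 𝒮) :
    x ≤ (f S ∩ F).ncard := by
  by_contra! hlt
  have hpow : θ ^ x ≤ θ ^ (f S ∩ F).ncard := by
    rw [← Real.rpow_natCast]
    exact Real.rpow_le_rpow_of_exponent_ge hθ0 hθ1 hlt.le
  have hterm : θ ^ (f S ∩ F).ncard ≤ potential 𝒮 f θ F :=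
    single_le_sum (f := fun S => θ ^ (f S ∩ F).ncard) (fun _ _ => by positivity) hS
  linarith

open Classical in
lemma potential_insert [Finite α] (𝒮 : Finset ι) (f : ι → Set α) (θ : ℝ) {F : Set α} {T : α}
    (hT : T ∉ F) :
    potential 𝒮 f θ (insert T F) = ∑ S ∈ 𝒮, θ ^ (f S ∩ F).ncard * if T ∈ f S then θ else 1 := by
  refine sum_congr rfl fun S _ => ?_
  split_ifs with hTS
  · rw [Set.inter_insert_of_mem hTS, Set.ncard_insert_of_notMem (fun h => hT h.2), pow_succ]
  · rw [Set.inter_insert_of_notMem hTS, mul_one]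

lemma exists_sum_mul_ite_le (𝒮 : Finset ι) {G : Finset α} (hG : G.Nonempty) (w : ι → ℝ)
    (hw : ∀ S ∈ 𝒮, 0 ≤ w S) (P : ι → α → Prop) [∀ S, DecidablePred (P S)] {q θ : ℝ}
    (hθ : θ ≤ 1) (hq : ∀ S ∈ 𝒮, q * #G ≤ #{T ∈ G | P S T}) :
    ∃ T ∈ G, ∑ S ∈ 𝒮, w S * (if P S T then θ else 1) ≤ (1 - q * (1 - θ)) * ∑ S ∈ 𝒮, w S := by
  refine exists_le_of_sum_le hG ?_
  have hinner : ∀ S, ∑ T ∈ G, (if P S T then θ else 1) = #G - (1 - θ) * #{T ∈ G | P S T} := by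
    intro S
    rw [card_filter, Nat.cast_sum, mul_sum, card_eq_sum_ones, Nat.cast_sum, ← sum_sub_distrib]
    refine sum_congr rfl fun T _ => ?_
    split_ifs <;> simp
  rw [sum_comm, sum_const, nsmul_eq_mul, mul_sum, mul_sum]
  refine sum_le_sum fun S hS => ?_
  rw [← mul_sum, hinner]
  nlinarith [mul_le_mul_of_nonneg_left (hq S hS) (sub_nonneg.2 hθ), hw S hS]

end Potential

section Tuples

variable {ι V : Type*} [Fintype V] {d : ℕ}

lemma le_one_of_mul_pow_le_ncard [Nonempty V] {a : ℝ} {A : Set (Fin d → V)}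
    (h : a * Fintype.card V ^ d ≤ A.ncard) : a ≤ 1 := by
  have hA : (A.ncard : ℝ) ≤ 1 * Fintype.card V ^ d := by
    rw [one_mul]
    exact_mod_cast (Set.ncard_le_card A).trans_eq (by simp)
  exact le_of_mul_le_mul_right (h.trans hA) (by positivity)

lemma card_filter_exists_mem_le [DecidableEq V] (U : Finset V) :
    #{T : Fin d → V | ∃ i, T i ∈ U} ≤ d * #U * Fintype.card V ^ (d - 1) := by
  calc #{T : Fin d → V | ∃ i, T i ∈ U}
      ≤ #((univ ×ˢ U).biUnion fun ix : Fin d × V => {T : Fin d → V | T ix.1 = ix.2}) := by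
        refine card_le_card fun T hT => ?_
        obtain ⟨i, hi⟩ := (mem_filter.1 hT).2
        exact mem_biUnion.2 ⟨(i, T i), mem_product.2 ⟨mem_univ _, hi⟩, by simp⟩
    _ ≤ ∑ ix ∈ univ ×ˢ U, #{T : Fin d → V | T ix.1 = ix.2} := card_biUnion_le
    _ = ∑ ix ∈ univ ×ˢ U, Fintype.card V ^ (d - 1) := by
        refine sum_congr rfl fun ix _ => ?_
        simpa using Fintype.card_filter_piFinset_const_eq_of_mem (univ : Finset V) ix.1
          (mem_univ ix.2)
    _ = d * #U * Fintype.card V ^ (d - 1) := by simp [card_product]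

lemma sub_mul_pow_le_card_filter_avoiding [DecidableEq V] (hd : 0 < d)
    {A : Finset (Fin d → V)} {U : Finset V} {a b : ℝ} (hA : a * Fintype.card V ^ d ≤ #A)
    (hU : (#U : ℝ) ≤ b * Fintype.card V) :
    (a - b * d) * Fintype.card V ^ d ≤ #{T ∈ A | ∀ i, T i ∉ U} := by
  set n := Fintype.card V
  have hsplit : (#A : ℝ) ≤ #{T ∈ A | ∀ i, T i ∉ U} + d * #U * n ^ (d - 1) := by
    rw [← card_filter_add_card_filter_not (s := A) (fun T : Fin d → V => ∀ i, T i ∉ U)]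
    refine mod_cast Nat.add_le_add_left
      ((card_le_card fun T hT => ?_).trans (card_filter_exists_mem_le U)) _
    simpa using (mem_filter.1 hT).2
  have hmeet : (d : ℝ) * #U * n ^ (d - 1) ≤ b * d * n ^ d :=
    calc (d : ℝ) * #U * n ^ (d - 1) ≤ d * (b * n) * n ^ (d - 1) := by gcongr
      _ = b * d * (n * n ^ (d - 1)) := by ring
      _ = b * d * n ^ d := by rw [← pow_succ', Nat.sub_add_cancel hd]
  linarith

lemma exists_potential_step [DecidableEq V] [Nonempty V] (hd : 0 < d) {𝒮 : Finset ι}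
    (h𝒮 : 𝒮.Nonempty) {f : ι → Set (Fin d → V)} {a b θ : ℝ}
    (hf : ∀ S ∈ 𝒮, a * Fintype.card V ^ d ≤ (f S).ncard) (hp : 0 < a - b * d)
    (hθ0 : 0 ≤ θ) (hθ1 : θ ≤ 1) (F : Finset (Fin d → V)) (hF : d * #F ≤ b * Fintype.card V) :
    ∃ T, (∃ S ∈ 𝒮, T ∈ f S) ∧ (∀ T' ∈ F, ∀ i j, T i ≠ T' j) ∧
      potential 𝒮 f θ ↑(insert T F) ≤ (1 - (a - b * d) * (1 - θ)) * potential 𝒮 f θ ↑F := by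
  classical
  set n := Fintype.card V
  set U := F.biUnion fun T => univ.image T
  have hmemU : ∀ T ∈ F, ∀ j, T j ∈ U := fun T hT j =>
    mem_biUnion.2 ⟨T, hT, mem_image_of_mem _ (mem_univ j)⟩
  have hU : (#U : ℝ) ≤ b * n := by
    refine le_trans ?_ hF
    have : #U ≤ d * #F := card_biUnion_le.trans <|
      (sum_le_sum fun T _ => card_image_le.trans_eq (card_fin d)).trans_eq (by simp [mul_comm])
    exact_mod_cast this
  set G : Finset (Fin d → V) := {T | (∀ i, T i ∉ U) ∧ ∃ S ∈ 𝒮, T ∈ f S}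
  have hfresh : ∀ S ∈ 𝒮, (a - b * d) * n ^ d ≤ #{T ∈ G | T ∈ f S} := by
    intro S hS
    have hsub : {T ∈ (f S).toFinset | ∀ i, T i ∉ U} ⊆ {T ∈ G | T ∈ f S} := by
      intro T hT
      simp only [mem_filter, Set.mem_toFinset, mem_univ, true_and, G] at hT ⊢
      exact ⟨⟨hT.2, S, hS, hT.1⟩, hT.1⟩
    have hA : a * n ^ d ≤ #(f S).toFinset := by
      rw [← Set.ncard_eq_toFinset_card']
      exact hf S hS
    exact (sub_mul_pow_le_card_filter_avoiding hd hA hU).trans (mod_cast card_le_card hsub)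
  have hGcard : (#G : ℝ) ≤ n ^ d := by
    exact_mod_cast (card_le_univ G).trans_eq (by simp [n])
  have hG : G.Nonempty := by
    obtain ⟨S, hS⟩ := h𝒮
    have := (hfresh S hS).trans_lt' (by positivity)
    exact (card_pos.1 (by exact_mod_cast this)).mono (filter_subset _ _)
  obtain ⟨T, hTG, hT⟩ := exists_sum_mul_ite_le 𝒮 hG (fun S => θ ^ (f S ∩ ↑F).ncard)
    (fun _ _ => by positivity) (fun S T => T ∈ f S) hθ1
    (fun S hS => (mul_le_mul_of_nonneg_left hGcard hp.le).trans (hfresh S hS))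
  simp only [G, mem_filter, mem_univ, true_and] at hTG
  have hdisj : ∀ T' ∈ F, ∀ i j, T i ≠ T' j := fun T' hT' i j h =>
    hTG.1 i (h ▸ hmemU T' hT' j)
  have hTF : T ∉ F := fun hTF => hdisj T hTF ⟨0, hd⟩ ⟨0, hd⟩ rfl
  refine ⟨T, hTG.2, hdisj, ?_⟩
  rw [coe_insert, potential_insert 𝒮 f θ (mod_cast hTF)]
  exact hT

lemma exists_greedy_family [DecidableEq V] [Nonempty V] (hd : 0 < d) {𝒮 : Finset ι}
    (h𝒮 : 𝒮.Nonempty) {f : ι → Set (Fin d → V)} {a b θ : ℝ}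
    (hf : ∀ S ∈ 𝒮, a * Fintype.card V ^ d ≤ (f S).ncard) (hp : 0 < a - b * d)
    (hθ0 : 0 ≤ θ) (hθ1 : θ ≤ 1) (hr : 0 ≤ 1 - (a - b * d) * (1 - θ)) (k : ℕ)
    (hk : d * k ≤ b * Fintype.card V) :
    ∃ F : Finset (Fin d → V), #F = k ∧ (∀ T ∈ F, ∃ S ∈ 𝒮, T ∈ f S) ∧
      (F : Set (Fin d → V)).Pairwise (fun T T' => ∀ i j, T i ≠ T' j) ∧
      potential 𝒮 f θ ↑F ≤ #𝒮 * (1 - (a - b * d) * (1 - θ)) ^ k := by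
  induction k with
  | zero => exact ⟨∅, rfl, by simp, by simp, by simp [potential]⟩
  | succ k ih =>
    have hk' : (d : ℝ) * k ≤ b * Fintype.card V := le_trans (by push_cast; nlinarith) hk
    obtain ⟨F, hcard, hgood, hpair, hΦ⟩ := ih hk'
    obtain ⟨T, hTgood, hTdisj, hTΦ⟩ :=
      exists_potential_step hd h𝒮 hf hp hθ0 hθ1 F (by rwa [hcard])
    have hTF : T ∉ F := fun hTF => hTdisj T hTF ⟨0, hd⟩ ⟨0, hd⟩ rfl
    refine ⟨insert T F, by rw [card_insert_of_notMem hTF, hcard], ?_, ?_, ?_⟩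
    · simpa [hTgood] using hgood
    · rw [coe_insert]
      exact hpair.insert fun T' hT' _ => ⟨hTdisj T' hT', fun i j => (hTdisj T' hT' j i).symm⟩
    · calc potential 𝒮 f θ ↑(insert T F)
          ≤ (1 - (a - b * d) * (1 - θ)) * potential 𝒮 f θ ↑F := hTΦ
        _ ≤ (1 - (a - b * d) * (1 - θ)) * (#𝒮 * (1 - (a - b * d) * (1 - θ)) ^ k) := by gcongr
        _ = #𝒮 * (1 - (a - b * d) * (1 - θ)) ^ (k + 1) := by ring

lemma exists_family_of_choose_mul_pow_lt [DecidableEq V] [Nonempty V] (hd : 0 < d) {m : ℕ}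
    (hm : m ≤ Fintype.card V) {f : Finset V → Set (Fin d → V)} {a b c θ : ℝ}
    (hf : ∀ S : Finset V, S.card = m → a * Fintype.card V ^ d ≤ (f S).ncard)
    (hb : 0 ≤ b) (hp : 0 < a - b * d) (hθ0 : 0 < θ) (hθ1 : θ ≤ 1)
    (hr : 0 ≤ 1 - (a - b * d) * (1 - θ))
    (hn : ((Fintype.card V).choose m : ℝ) * (1 - (a - b * d) * (1 - θ)) ^ ⌊b / d * Fintype.card V⌋₊
      < θ ^ (c * Fintype.card V)) :
    ∃ F : Finset (Fin d → V), (∀ T ∈ F, ∃ S : Finset V, S.card = m ∧ T ∈ f S) ∧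
      (#F : ℝ) ≤ b * Fintype.card V / d ∧
      (∀ S : Finset V, S.card = m → c * Fintype.card V ≤ (f S ∩ ↑F).ncard) ∧
      (F : Set (Fin d → V)).Pairwise (fun T T' => ∀ i j, T i ≠ T' j) := by
  set n := Fintype.card V
  have h𝒮 : (powersetCard m (univ : Finset V)).Nonempty := by
    rwa [powersetCard_nonempty, card_univ]
  have hk : (d : ℝ) * ⌊b / d * n⌋₊ ≤ b * n :=
    (mul_le_mul_of_nonneg_left (Nat.floor_le (by positivity)) d.cast_nonneg).trans_eq
      (by field_simp)
  obtain ⟨F, hcard, hgood, hpair, hΦ⟩ := exists_greedy_family hd h𝒮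
    (fun S hS => hf S (mem_powersetCard_univ.1 hS)) hp hθ0.le hθ1 hr _ hk
  rw [card_powersetCard, card_univ] at hΦ
  refine ⟨F, fun T hT => ?_, ?_, fun S hS => ?_, hpair⟩
  · obtain ⟨S, hS, hTS⟩ := hgood T hT
    exact ⟨S, mem_powersetCard_univ.1 hS, hTS⟩
  · rw [hcard, mul_div_right_comm]
    exact Nat.floor_le (by positivity)
  · exact le_ncard_inter_of_potential_lt hθ0 hθ1 (hΦ.trans_lt hn) (mem_powersetCard_univ.2 hS)

end Tuples

theorem statement12_general (m d : ℕ) (hd : 0 < d) (a b c : ℝ)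
    (hb : 0 < b ∧ b < a / (2 * d))
    (hc : 0 < c ∧ c < 2 * b * (a / (2 * d) - b)) :
    ∃ n₀ : ℕ, ∀ (V : Type) [Fintype V], n₀ ≤ Fintype.card V →
      ∀ f : Finset V → Set (Fin d → V),
        (∀ S : Finset V, S.card = m →
          a * (Fintype.card V : ℝ) ^ d ≤ ((f S).ncard : ℝ)) →
        ∃ F : Set (Fin d → V),
          -- every element of F is a good tuple
          (∀ T ∈ F, ∃ S : Finset V, S.card = m ∧ T ∈ f S) ∧
          (F.ncard : ℝ) ≤ b * (Fintype.card V : ℝ) / d ∧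
          (∀ S : Finset V, S.card = m →
            c * (Fintype.card V : ℝ) ≤ ((f S ∩ F).ncard : ℝ)) ∧
          -- coordinate sets of distinct tuples in F are pairwise disjoint
          (∀ T ∈ F, ∀ T' ∈ F, T ≠ T' → ∀ i j : Fin d, T i ≠ T' j) := by
  obtain ⟨hb0, hb⟩ := hb
  obtain ⟨hc0, hc⟩ := hc
  rcases lt_or_ge 1 a with ha1 | ha1
  · refine ⟨max m 1, fun V _ hn f hf => absurd ?_ ha1.not_ge⟩
    have : Nonempty V := Fintype.card_pos_iff.1 (by omega)
    obtain ⟨S, -, hS⟩ := exists_subset_card_eq (s := (univ : Finset V)) (n := m) (by simp; omega)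
    exact le_one_of_mul_pow_le_ncard (hf S hS)
  have hdR : (0 : ℝ) < d := by exact_mod_cast hd
  have hbd : 2 * b * d < a := by
    rw [lt_div_iff₀ (by positivity)] at hb
    linarith
  have hp : 0 < a - b * d := by nlinarith
  have hcp : c < b / d * (a - b * d) := by
    have : 2 * b * (a / (2 * d) - b) = b / d * (a - b * d) - b ^ 2 := by field_simp; ring
    nlinarith
  obtain ⟨θ, hθ0, hθ1, hr0, hbase⟩ :=
    exists_one_sub_mul_rpow_lt_rpow (by positivity) hc0.le hp (by nlinarith) hcp
  obtain ⟨n₀, hn₀⟩ := eventually_atTop.1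
    (eventually_choose_mul_pow_floor_lt m hr0 (by nlinarith) hθ0 hbase)
  refine ⟨max n₀ (max m 1), fun V _ hn f hf => ?_⟩
  classical
  have : Nonempty V := Fintype.card_pos_iff.1 (by omega)
  obtain ⟨F, hgood, hcard, hcover, hpair⟩ := exists_family_of_choose_mul_pow_lt hd (by omega) hf
    hb0.le hp hθ0 hθ1.le hr0.le (hn₀ _ (by omega))
  exact ⟨F, hgood, by rwa [Set.ncard_coe_finset], hcover, fun T hT T' hT' hne => hpair hT hT' hne⟩

theorem statement12 (m d : ℕ) (hm : 0 < m) (hd : 0 < d) (a b c : ℝ)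
    (ha : 0 < a) (hb : 0 < b ∧ b < a / (2 * d))
    (hc : 0 < c ∧ c < 2 * b * (a / (2 * d) - b)) :
    ∃ n₀ : ℕ, ∀ (V : Type) [Fintype V], n₀ ≤ Fintype.card V →
      ∀ f : Finset V → Set (Fin d → V),
        (∀ S : Finset V, S.card = m →
          a * (Fintype.card V : ℝ) ^ d ≤ ((f S).ncard : ℝ)) →
        ∃ F : Set (Fin d → V),
          -- every element of F is a good tuple
          (∀ T ∈ F, ∃ S : Finset V, S.card = m ∧ T ∈ f S) ∧
          (F.ncard : ℝ) ≤ b * (Fintype.card V : ℝ) / d ∧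
          (∀ S : Finset V, S.card = m →
            c * (Fintype.card V : ℝ) ≤ ((f S ∩ F).ncard : ℝ)) ∧
          -- coordinate sets of distinct tuples in F are pairwise disjoint
          (∀ T ∈ F, ∀ T' ∈ F, T ≠ T' → ∀ i j : Fin d, T i ≠ T' j) :=
  statement12_general m d hd a b c hb hc
end

section
/- For all integers d, D with 1 ≤ d ≤ D there exists n₀ such that the following holds: if G is a directed graph on n ≥ n₀ vertices with minimum out-degree δ⁺(G) ≥ d and maximum in-degree Δ⁻(G) ≤ D, then G contains a collection of at least ((d−1)n − 4(d−1+D)) / (3(d+D−1)) pairwise vertex-disjoint 2-in-stars together with two independent edges, all of these subgraphs being pairwise vertex-disjoint. -/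
theorem statement18 (d D : ℕ) (hd : 1 ≤ d) (hdD : d ≤ D) :
    ∃ n₀ : ℕ, ∀ (V : Type) [Fintype V] [DecidableEq V] (E : V → V → Prop),
      (∀ v, ¬ E v v) →
      n₀ ≤ Fintype.card V →
      (∀ v, d ≤ outDeg E v) → (∀ v, inDeg E v ≤ D) →
      ∃ (k : ℕ) (a b c : Fin k → V) (u v u' v' : V),
        -- at least ((d-1)n - 4(d-1+D)) / (3(d+D-1)) stars
        (((d : ℝ) - 1) * (Fintype.card V : ℝ) - 4 * ((d : ℝ) - 1 + D)) /
            (3 * ((d : ℝ) + D - 1)) ≤ (k : ℝ) ∧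
        -- each star is a 2-in-star with centre a i and leaves b i, c i
        (∀ i : Fin k, E (b i) (a i) ∧ E (c i) (a i)) ∧
        -- the two independent edges
        E u v ∧ E u' v' ∧
        -- all of these subgraphs are pairwise vertex-disjoint
        ((Finset.univ.biUnion fun i : Fin k => ({a i, b i, c i} : Finset V)) ∪
            ({u, v, u', v'} : Finset V)).card = 3 * k + 4 := by
  classical
  refine ⟨2 * D + 3, ?_⟩
  intro V _ _ E hirr hn hdout hDin
  have hD1 : 1 ≤ D := hd.trans hdD
  -- degrees as finset cardinalities
  have houtd : ∀ v : V, outDeg E v = (Finset.univ.filter fun w => E v w).card := by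
    intro v; rw [outDeg, ← Set.ncard_coe_finset]; congr 1; ext w; simp
  have hind : ∀ v : V, inDeg E v = (Finset.univ.filter fun w => E w v).card := by
    intro v; rw [inDeg, ← Set.ncard_coe_finset]; congr 1; ext w; simp
  have hout : ∀ v : V, d ≤ (Finset.univ.filter fun w => E v w).card :=
    fun v => (houtd v) ▸ hdout v
  have hin : ∀ v : V, (Finset.univ.filter fun w => E w v).card ≤ D :=
    fun v => (hind v) ▸ hDin v
  have hne : ∀ w : V, ∃ x, E w x := by
    intro w
    have : 0 < (Finset.univ.filter fun x => E w x).card := lt_of_lt_of_le hd (hout w)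
    obtain ⟨x, hx⟩ := Finset.card_pos.mp this
    exact ⟨x, (Finset.mem_filter.mp hx).2⟩
  have hVpos : 0 < Fintype.card V := by omega
  obtain ⟨u⟩ : Nonempty V := Fintype.card_pos_iff.mp hVpos
  obtain ⟨v, huv⟩ := hne u
  -- find a second, independent edge
  have hbig : ¬ ((Finset.univ : Finset V) ⊆ ({u, v} : Finset V)
      ∪ (Finset.univ.filter fun z => E z u) ∪ (Finset.univ.filter fun z => E z v)) := by
    intro hsub
    have h1 := Finset.card_le_card hsub
    have c1 : ({u, v} : Finset V).card ≤ 2 := by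
      apply le_trans (Finset.card_insert_le _ _); simp
    have h2 := le_trans (Finset.card_union_le _ _)
      (add_le_add (le_trans (Finset.card_union_le _ _) (add_le_add c1 (hin u))) (hin v))
    rw [Finset.card_univ] at h1
    omega
  have hexw : ∃ w : V, w ∉ ({u, v} : Finset V)
      ∪ (Finset.univ.filter fun z => E z u) ∪ (Finset.univ.filter fun z => E z v) := by
    by_contra h
    push_neg at h
    exact hbig fun z _ => h z
  obtain ⟨w, hw⟩ := hexw
  simp only [Finset.mem_union, Finset.mem_insert, Finset.mem_singleton, Finset.mem_filter,
    Finset.mem_univ, true_and, not_or] at hw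
  obtain ⟨⟨⟨hwu, hwv⟩, hEwu⟩, hEwv⟩ := hw
  obtain ⟨x, hwx⟩ := hne w
  have hxu : x ≠ u := fun h => hEwu (h ▸ hwx)
  have hxv : x ≠ v := fun h => hEwv (h ▸ hwx)
  have hwx' : w ≠ x := fun h => hirr w (by rw [← h] at hwx; exact hwx)
  have huv' : u ≠ v := fun h => hirr u (h ▸ huv)
  have hvw : v ≠ w := fun h => hwv h.symm
  have hvx : v ≠ x := fun h => hxv h.symm
  have huw : u ≠ w := fun h => hwu h.symm
  have hux : u ≠ x := fun h => hxu h.symm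
  have hfour : ({u, v, w, x} : Finset V).card = 4 := by
    rw [Finset.card_insert_of_notMem, Finset.card_insert_of_notMem,
      Finset.card_insert_of_notMem, Finset.card_singleton]
    · simp [hwx']
    · simp [hvw, hvx]
    · simp [huv', huw, hux]
  -- a maximum collection of vertex-disjoint 2-in-stars avoiding {u,v,w,x}
  obtain ⟨S, ⟨hS1, hS2, hS3⟩, hScard⟩ :=
    Nat.findGreatest_spec (P := fun m => ∃ T : Finset (V × V × V),
      ((∀ t ∈ T, E t.2.1 t.1 ∧ E t.2.2 t.1) ∧
       (T.biUnion fun t => ({t.1, t.2.1, t.2.2} : Finset V)).card = 3 * T.card ∧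
       Disjoint (T.biUnion fun t => ({t.1, t.2.1, t.2.2} : Finset V))
         ({u, v, w, x} : Finset V)) ∧ T.card = m)
      (Nat.zero_le (Fintype.card (V × V × V)))
      ⟨∅, ⟨fun t ht => absurd ht (Finset.notMem_empty t), by simp, by simp⟩, rfl⟩
  have hSmax : ∀ S' : Finset (V × V × V),
      ((∀ t ∈ S', E t.2.1 t.1 ∧ E t.2.2 t.1) ∧
       (S'.biUnion fun t => ({t.1, t.2.1, t.2.2} : Finset V)).card = 3 * S'.card ∧
       Disjoint (S'.biUnion fun t => ({t.1, t.2.1, t.2.2} : Finset V))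
         ({u, v, w, x} : Finset V)) → S'.card ≤ S.card := by
    intro S' hg
    by_contra hlt
    push_neg at hlt
    exact Nat.findGreatest_is_greatest (hScard ▸ hlt)
      (le_of_le_of_eq (Finset.card_le_univ S') Finset.card_univ) ⟨S', hg, rfl⟩
  clear hScard
  set k := S.card with hk
  set VS := S.biUnion (fun t => ({t.1, t.2.1, t.2.2} : Finset V)) with hVS
  set X := VS ∪ ({u, v, w, x} : Finset V) with hXdef
  set R := (Finset.univ : Finset V) \ X with hRdef
  have hXcard : X.card = 3 * k + 4 := by
    rw [hXdef, Finset.card_union_of_disjoint hS3, hS2, hfour]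
  have hRcard : R.card + (3 * k + 4) = Fintype.card V := by
    rw [hRdef, ← hXcard, Finset.card_sdiff_add_card_eq_card (Finset.subset_univ X),
      Finset.card_univ]
  have hmemR : ∀ y ∈ R, y ∉ VS ∧ y ∉ ({u, v, w, x} : Finset V) := by
    intro y hy
    rw [hRdef, Finset.mem_sdiff, hXdef, Finset.mem_union] at hy
    tauto
  -- maximality: no vertex in R has two in-neighbours in R
  have hmax : ∀ a ∈ R, ∀ b ∈ R, ∀ c ∈ R, b ≠ c → E b a → E c a → False := by
    intro a ha b hb c hc hbc hba hca
    obtain ⟨haVS, ha4⟩ := hmemR a ha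
    obtain ⟨hbVS, hb4⟩ := hmemR b hb
    obtain ⟨hcVS, hc4⟩ := hmemR c hc
    have hab : a ≠ b := fun h => hirr b (h ▸ hba)
    have hac : a ≠ c := fun h => hirr c (h ▸ hca)
    have hnotmem : (a, b, c) ∉ S := by
      intro hmem
      exact haVS (Finset.mem_biUnion.mpr ⟨(a, b, c), hmem, by simp⟩)
    have hvertsS' : (insert (a, b, c) S).biUnion (fun t => ({t.1, t.2.1, t.2.2} : Finset V))
        = ({a, b, c} : Finset V) ∪ VS := by
      rw [Finset.biUnion_insert]
    have habc : ({a, b, c} : Finset V).card = 3 := by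
      rw [Finset.card_insert_of_notMem, Finset.card_insert_of_notMem, Finset.card_singleton]
      · simp [hbc]
      · simp [hab, hac]
    have hdisj1 : Disjoint ({a, b, c} : Finset V) VS := by
      rw [Finset.disjoint_left]
      intro y hy
      rcases Finset.mem_insert.mp hy with h | hy'
      · rw [h]; exact haVS
      rcases Finset.mem_insert.mp hy' with h | h
      · rw [h]; exact hbVS
      · rw [Finset.mem_singleton.mp h]; exact hcVS
    have hdisj2 : Disjoint ({a, b, c} : Finset V) ({u, v, w, x} : Finset V) := by
      rw [Finset.disjoint_left]
      intro y hy
      rcases Finset.mem_insert.mp hy with h | hy'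
      · rw [h]; exact ha4
      rcases Finset.mem_insert.mp hy' with h | h
      · rw [h]; exact hb4
      · rw [Finset.mem_singleton.mp h]; exact hc4
    have hgood' := hSmax (insert (a, b, c) S) ⟨?_, ?_, ?_⟩
    · rw [Finset.card_insert_of_notMem hnotmem] at hgood'
      omega
    · intro t ht
      rcases Finset.mem_insert.mp ht with h | h
      · rw [h]; exact ⟨hba, hca⟩
      · exact hS1 t h
    · rw [hvertsS', Finset.card_union_of_disjoint hdisj1, habc, hS2,
        Finset.card_insert_of_notMem hnotmem]
      ring
    · rw [hvertsS']
      exact Finset.disjoint_union_left.mpr ⟨hdisj2, hS3⟩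
  -- double counting
  have hcount : d * R.card ≤ R.card + (3 * k + 4) * D := by
    have hdisjRX : Disjoint R X := by rw [hRdef]; exact Finset.sdiff_disjoint
    have step1 : ∀ z ∈ R, (Finset.univ.filter fun y => E z y).card =
        (R.filter fun y => E z y).card + (X.filter fun y => E z y).card := by
      intro z _
      have hsplit : (Finset.univ.filter fun y => E z y) =
          (R.filter fun y => E z y) ∪ (X.filter fun y => E z y) := by
        ext y
        simp only [Finset.mem_filter, Finset.mem_union, Finset.mem_univ, true_and, hRdef,
          Finset.mem_sdiff]
        tauto
      rw [hsplit, Finset.card_union_of_disjoint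
        (Finset.disjoint_filter_filter hdisjRX)]
    have hsum1 : d * R.card ≤ ∑ z ∈ R, (Finset.univ.filter fun y => E z y).card := by
      calc d * R.card = ∑ _z ∈ R, d := by simp [Finset.sum_const, mul_comm]
        _ ≤ _ := Finset.sum_le_sum fun z _ => hout z
    have hswap1 : ∑ z ∈ R, (R.filter fun y => E z y).card
        = ∑ y ∈ R, (R.filter fun z => E z y).card := by
      simp only [Finset.card_filter]
      exact Finset.sum_comm
    have hswap2 : ∑ z ∈ R, (X.filter fun y => E z y).card
        = ∑ y ∈ X, (R.filter fun z => E z y).card := by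
      simp only [Finset.card_filter]
      exact Finset.sum_comm
    have hb1 : ∀ y ∈ R, (R.filter fun z => E z y).card ≤ 1 := by
      intro y hy
      rw [Finset.card_le_one]
      intro b hb c hc
      by_contra hne'
      exact hmax y hy b (Finset.mem_of_mem_filter b hb) c (Finset.mem_of_mem_filter c hc)
        hne' (Finset.mem_filter.mp hb).2 (Finset.mem_filter.mp hc).2
    have hb2 : ∀ y : V, (R.filter fun z => E z y).card ≤ D := by
      intro y
      refine le_trans (Finset.card_le_card ?_) (hin y)
      intro z hz
      exact Finset.mem_filter.mpr ⟨Finset.mem_univ z, (Finset.mem_filter.mp hz).2⟩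
    calc d * R.card ≤ ∑ z ∈ R, (Finset.univ.filter fun y => E z y).card := hsum1
      _ = ∑ z ∈ R, ((R.filter fun y => E z y).card + (X.filter fun y => E z y).card) :=
          Finset.sum_congr rfl step1
      _ = (∑ z ∈ R, (R.filter fun y => E z y).card)
          + ∑ z ∈ R, (X.filter fun y => E z y).card := Finset.sum_add_distrib
      _ = (∑ y ∈ R, (R.filter fun z => E z y).card)
          + ∑ y ∈ X, (R.filter fun z => E z y).card := by rw [hswap1, hswap2]
      _ ≤ (∑ _y ∈ R, 1) + ∑ _y ∈ X, D :=
          add_le_add (Finset.sum_le_sum hb1) (Finset.sum_le_sum fun y _ => hb2 y)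
      _ = R.card + (3 * k + 4) * D := by
          rw [Finset.sum_const, Finset.sum_const, smul_eq_mul, smul_eq_mul, mul_one, hXcard]
  -- assemble the answer
  refine ⟨k, fun i => ((S.equivFin.symm i : V × V × V)).1,
    fun i => ((S.equivFin.symm i : V × V × V)).2.1,
    fun i => ((S.equivFin.symm i : V × V × V)).2.2, u, v, w, x, ?_, ?_, huv, hwx, ?_⟩
  · -- the counting inequality
    have hpos : (0 : ℝ) < 3 * ((d : ℝ) + D - 1) := by
      have h1 : (1 : ℝ) ≤ (d : ℝ) := by exact_mod_cast hd
      have h2 : (1 : ℝ) ≤ (D : ℝ) := by exact_mod_cast hD1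
      linarith
    rw [div_le_iff₀ hpos]
    have hc' : (d : ℝ) * R.card ≤ R.card + (3 * k + 4) * D := by exact_mod_cast hcount
    have hn' : (Fintype.card V : ℝ) = R.card + 3 * k + 4 := by
      have h := hRcard
      have : ((R.card + (3 * k + 4) : ℕ) : ℝ) = ((Fintype.card V : ℕ) : ℝ) := by
        exact_mod_cast congrArg (Nat.cast : ℕ → ℝ) h
      push_cast at this
      linarith
    rw [hn']
    have h1 : (1 : ℝ) ≤ (d : ℝ) := by exact_mod_cast hd
    have h2 : (0 : ℝ) ≤ (R.card : ℝ) := by positivity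
    nlinarith [hc']
  · -- star property
    intro i
    exact hS1 _ (S.equivFin.symm i).2
  · -- disjointness / cardinality
    have hbU : (Finset.univ.biUnion fun i : Fin k =>
        ({((S.equivFin.symm i : V × V × V)).1, ((S.equivFin.symm i : V × V × V)).2.1,
          ((S.equivFin.symm i : V × V × V)).2.2} : Finset V)) = VS := by
      ext y
      rw [hVS]
      simp only [Finset.mem_biUnion, Finset.mem_univ, true_and]
      constructor
      · rintro ⟨i, hy⟩
        exact ⟨(S.equivFin.symm i : V × V × V), (S.equivFin.symm i).2, hy⟩
      · rintro ⟨t, ht, hy⟩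
        refine ⟨S.equivFin ⟨t, ht⟩, ?_⟩
        simpa [Equiv.symm_apply_apply] using hy
    rw [hbU, Finset.card_union_of_disjoint hS3, hS2, hfour]
end

section
/- For every ε > 0 there exists n₀ such that the following holds: if D is a directed graph on n ≥ n₀ vertices, S ⊆ V(D), m is an integer with 0 ≤ m ≤ |S|, and c = m/|S|, then there exists T ⊆ S with |T| = m such that for every vertex v of D: ||N⁺(v) ∩ T| − c·|N⁺(v) ∩ S|| ≤ εn, ||N⁻(v) ∩ T| − c·|N⁻(v) ∩ S|| ≤ εn, ||N⁺(v) ∩ (S \ T)| − (1−c)·|N⁺(v) ∩ S|| ≤ εn, and ||N⁻(v) ∩ (S \ T)| − (1−c)·|N⁻(v) ∩ S|| ≤ εn. -/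
/-!
Choose `T ⊆ S` at random, each vertex independently with probability `c = m / |S|`. For a fixed
set `N`, the deviation `|N ∩ T| - c |N ∩ S|` is a sum of independent centred terms bounded
by 1, so its fourth moment is at most `|S|²`. Summing over the `2n` neighbourhoods of `D` and
over `S` itself, the expected total is at most `(2n + 1) |S|² ≤ 3n³`, so some `T` has every
deviation at most `(3n³)^(1/4) ≤ εn/2` once `n ≥ 48/ε⁴`; in particular `|T|` is within `εn/2`
of `m`. Adding or removing `||T| - m|` vertices then gives `|T| = m` at the cost of another
`εn/2`, and the bounds for `S \ T` follow from those for `T`.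
-/

open Finset

namespace RandomSubset

variable {V : Type*}

/-- The expectation of `F T` for a random `T ⊆ s` containing each element independently with
probability `c`. -/
noncomputable def mean (c : ℝ) (s : Finset V) (F : Finset V → ℝ) : ℝ :=
  ∑ t ∈ s.powerset, c ^ #t * (1 - c) ^ (#s - #t) * F t

variable {c : ℝ} {s : Finset V}

lemma mean_congr {F G : Finset V → ℝ} (h : ∀ t ⊆ s, F t = G t) : mean c s F = mean c s G :=
  sum_congr rfl fun t ht => by rw [h t (mem_powerset.1 ht)]

lemma mean_add (F G : Finset V → ℝ) :
    mean c s (fun t => F t + G t) = mean c s F + mean c s G := by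
  simp only [mean, mul_add, sum_add_distrib]

lemma mean_sum {ι : Type*} (I : Finset ι) (F : ι → Finset V → ℝ) :
    mean c s (fun t => ∑ i ∈ I, F i t) = ∑ i ∈ I, mean c s (F i) := by
  simp only [mean, mul_sum]
  exact sum_comm

lemma mean_const_mul (r : ℝ) (F : Finset V → ℝ) :
    mean c s (fun t => r * F t) = r * mean c s F := by
  simp only [mean, mul_sum]
  exact sum_congr rfl fun _ _ => by ring

lemma mean_const (r : ℝ) : mean c s (fun _ => r) = r := by
  rw [mean, ← sum_mul, sum_pow_mul_eq_add_pow, add_sub_cancel, one_pow, one_mul]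

lemma mean_add_const_pow (X : Finset V → ℝ) (b : ℝ) (k : ℕ) :
    mean c s (fun t => (X t + b) ^ k)
      = ∑ j ∈ range (k + 1), (k.choose j * b ^ (k - j)) * mean c s (fun t => X t ^ j) := by
  simp_rw [add_pow, mean_sum, ← mean_const_mul]
  exact sum_congr rfl fun _ _ => congrArg _ (funext fun _ => by ring)

lemma exists_le_of_mean_le (hc0 : 0 ≤ c) (hc1 : c ≤ 1) {F : Finset V → ℝ} {B : ℝ}
    (h : mean c s F ≤ B) : ∃ t ⊆ s, F t ≤ B := by
  by_contra! hlt
  have hw : ∀ t ∈ s.powerset, 0 ≤ c ^ #t * (1 - c) ^ (#s - #t) := fun t _ => by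
    have := sub_nonneg.2 hc1; positivity
  obtain ⟨t₀, ht₀, hpos⟩ : ∃ t ∈ s.powerset, c ^ #t * (1 - c) ^ (#s - #t) ≠ 0 :=
    exists_ne_zero_of_sum_ne_zero (by rw [sum_pow_mul_eq_add_pow]; norm_num)
  have : mean c s (fun _ => B) < mean c s F :=
    sum_lt_sum (fun t ht => mul_le_mul_of_nonneg_left (hlt t (mem_powerset.1 ht)).le (hw t ht))
      ⟨t₀, ht₀, mul_lt_mul_of_pos_left (hlt t₀ (mem_powerset.1 ht₀))
        (lt_of_le_of_ne (hw t₀ ht₀) hpos.symm)⟩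
  rw [mean_const] at this
  linarith

variable [DecidableEq V]

lemma mean_insert {w : V} (hw : w ∉ s) (F : Finset V → ℝ) :
    mean c (insert w s) F = (1 - c) * mean c s F + c * mean c s (fun t => F (insert w t)) := by
  rw [mean, sum_powerset_insert hw, mean, mean, mul_sum, mul_sum, card_insert_of_notMem hw]
  congr 1 <;> refine sum_congr rfl fun t ht => ?_
  · have := card_le_card (mem_powerset.1 ht)
    rw [show #s + 1 - #t = #s - #t + 1 by omega]
    ring
  · have hwt : w ∉ t := fun h => hw (mem_powerset.1 ht h)
    rw [card_insert_of_notMem hwt, Nat.add_sub_add_right]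
    ring

noncomputable def deviation (a : V → ℝ) (c : ℝ) (s t : Finset V) : ℝ :=
  ∑ w ∈ s, a w * ((if w ∈ t then 1 else 0) - c)

lemma deviation_insert_of_notMem {a : V → ℝ} {t : Finset V} {w : V} (hw : w ∉ s) (ht : t ⊆ s) :
    deviation a c (insert w s) t = deviation a c s t + -c * a w := by
  rw [deviation, sum_insert hw, if_neg fun h => hw (ht h), deviation]
  ring

lemma deviation_insert_insert {a : V → ℝ} {t : Finset V} {w : V} (hw : w ∉ s) :
    deviation a c (insert w s) (insert w t) = deviation a c s t + (1 - c) * a w := by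
  rw [deviation, sum_insert hw, if_pos (mem_insert_self w t), deviation, add_comm, mul_comm]
  congr 1
  exact sum_congr rfl fun u hu => by
    rw [if_congr (mem_insert.trans (or_iff_right (ne_of_mem_of_not_mem hu hw))) rfl rfl]

lemma mean_comp_deviation_insert (φ : ℝ → ℝ) (a : V → ℝ) {w : V} (hw : w ∉ s) :
    mean c (insert w s) (fun t => φ (deviation a c (insert w s) t))
      = (1 - c) * mean c s (fun t => φ (deviation a c s t + -c * a w))
        + c * mean c s (fun t => φ (deviation a c s t + (1 - c) * a w)) := by
  rw [mean_insert hw, mean_congr fun t ht => by rw [deviation_insert_of_notMem hw ht]]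
  simp only [deviation_insert_insert hw]

lemma mean_deviation (a : V → ℝ) (c : ℝ) (s : Finset V) :
    mean c s (fun t => deviation a c s t) = 0 := by
  induction s using Finset.induction_on with
  | empty => simp [mean, deviation]
  | insert w s hw ih =>
    rw [mean_comp_deviation_insert (fun x => x) a hw]
    simp only [mean_add, mean_const, ih]
    ring

lemma mean_deviation_sq (a : V → ℝ) (c : ℝ) (s : Finset V) :
    mean c s (fun t => deviation a c s t ^ 2) = c * (1 - c) * ∑ w ∈ s, a w ^ 2 := by
  induction s using Finset.induction_on with
  | empty => simp [mean, deviation]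
  | insert w s hw ih =>
    rw [mean_comp_deviation_insert (fun x => x ^ 2) a hw]
    simp only [mean_add_const_pow, sum_range_succ, sum_range_zero, pow_zero, pow_one, mean_const,
      mean_deviation, ih, sum_insert hw]
    norm_num
    ring

lemma mean_deviation_pow_four_le (hc0 : 0 ≤ c) (hc1 : c ≤ 1) {a : V → ℝ} (ha : ∀ w, |a w| ≤ 1)
    (s : Finset V) : mean c s (fun t => deviation a c s t ^ 4) ≤ #s ^ 2 := by
  induction s using Finset.induction_on with
  | empty => simp [mean, deviation]
  | insert w s hw ih =>
    rw [mean_comp_deviation_insert (fun x => x ^ 4) a hw]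
    simp only [mean_add_const_pow, sum_range_succ, sum_range_zero, pow_zero, pow_one, mean_const,
      mean_deviation, mean_deviation_sq, card_insert_of_notMem hw]
    set W4 := mean c s fun t => deviation a c s t ^ 4
    set A := ∑ w ∈ s, a w ^ 2
    have hA : 0 ≤ A ∧ A ≤ #s := ⟨sum_nonneg fun _ _ => sq_nonneg _, by
      simpa using sum_le_card_nsmul s _ 1 fun w _ => (sq_le_one_iff_abs_le_one _).2 (ha w)⟩
    obtain ⟨p, hp_def, hp⟩ : ∃ p, p = c * (1 - c) ∧ 0 ≤ p ∧ p ≤ 1 / 4 :=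
      ⟨_, rfl, mul_nonneg hc0 (sub_nonneg.2 hc1), by nlinarith [sq_nonneg (2 * c - 1)]⟩
    obtain ⟨q, hq_def, hq, hq1⟩ : ∃ q, q = a w ^ 2 ∧ 0 ≤ q ∧ q ≤ 1 :=
      ⟨_, rfl, sq_nonneg _, (sq_le_one_iff_abs_le_one _).2 (ha w)⟩
    have h2 : p ^ 2 * q ≤ 1 / 16 := by nlinarith [mul_le_mul hp.2 hp.2 hp.1 (by norm_num)]
    have h4 : p * q ^ 2 * (1 - 3 * p) ≤ 1 / 4 := by
      have : q ^ 2 ≤ 1 := by nlinarith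
      nlinarith [mul_le_mul this (by linarith : 1 - 3 * p ≤ 1) (by linarith) zero_le_one]
    push_cast
    -- the third-moment terms cancel: the new summand has mean `(1 - c) (-c a) + c (1 - c) a = 0`
    calc _ = W4 + 6 * (p ^ 2 * q) * A + p * q ^ 2 * (1 - 3 * p) := by
          norm_num [Nat.choose, hp_def, hq_def]; ring
      _ ≤ #s ^ 2 + 6 * (1 / 16) * #s + 1 / 4 := by gcongr; exacts [hA.2]
      _ ≤ (#s + 1) ^ 2 := by nlinarith [hA.1.trans hA.2]

lemma deviation_indicator (P : V → Prop) [DecidablePred P] {t : Finset V} (ht : t ⊆ s) :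
    deviation (fun w => if P w then 1 else 0) c s t = #(t.filter P) - c * #(s.filter P) := by
  have : (s.filter P).filter (· ∈ t) = t.filter P := by
    ext w; simp only [mem_filter]; exact ⟨fun h => ⟨h.2, h.1.2⟩, fun h => ⟨⟨ht h.1, h.2⟩, h.1⟩⟩
  simp only [deviation, ite_mul, one_mul, zero_mul, ← sum_filter, sum_sub_distrib,
    sum_const, nsmul_eq_mul, this]
  ring

lemma exists_subset_forall_deviation_pow_four_le {ι : Type*} [Fintype ι] (hc0 : 0 ≤ c)
    (hc1 : c ≤ 1) {a : ι → V → ℝ} (ha : ∀ i w, |a i w| ≤ 1) (s : Finset V) :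
    ∃ t ⊆ s, ∀ i, deviation (a i) c s t ^ 4 ≤ Fintype.card ι * #s ^ 2 := by
  have hmean :
      mean c s (fun t => ∑ i, deviation (a i) c s t ^ 4) ≤ Fintype.card ι * #s ^ 2 := by
    rw [mean_sum]
    calc _ ≤ ∑ _i : ι, (#s : ℝ) ^ 2 :=
          sum_le_sum fun i _ => mean_deviation_pow_four_le hc0 hc1 (ha i) s
      _ = _ := by simp
  obtain ⟨t, hts, ht⟩ := exists_le_of_mean_le hc0 hc1 hmean
  exact ⟨t, hts, fun i => (single_le_sum (fun j _ => by positivity) (mem_univ i)).trans ht⟩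

end RandomSubset

open RandomSubset

lemma abs_card_filter_sub_card_filter_le {V : Type*} (P : V → Prop) [DecidablePred P]
    {t u : Finset V} (h : u ⊆ t ∨ t ⊆ u) :
    |(#(u.filter P) : ℝ) - #(t.filter P)| ≤ |(#u : ℝ) - #t| := by
  classical
  wlog hut : u ⊆ t generalizing t u
  · rw [abs_sub_comm, abs_sub_comm (#u : ℝ)]
    exact this h.symm (h.resolve_left hut)
  have hle : (#(u.filter P) : ℝ) ≤ #(t.filter P) := by
    exact_mod_cast card_le_card (filter_subset_filter P hut)
  have hcard : (#u : ℝ) ≤ #t := by exact_mod_cast card_le_card hut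
  have hsdiff : (#(t.filter P) : ℝ) ≤ #(u.filter P) + #(t \ u) := by
    refine mod_cast (card_le_card fun w hw => ?_).trans (card_union_le _ _)
    by_cases hwu : w ∈ u <;> simp_all
  rw [card_sdiff_of_subset hut, Nat.cast_sub (card_le_card hut)] at hsdiff
  calc _ = (#(t.filter P) : ℝ) - #(u.filter P) := by
        rw [abs_sub_comm, abs_of_nonneg (sub_nonneg.2 hle)]
    _ ≤ #t - #u := by linarith
    _ = _ := by rw [abs_sub_comm, abs_of_nonneg (sub_nonneg.2 hcard)]

lemma exists_subset_card_eq_and_comparable {V : Type*} {s t : Finset V} {m : ℕ} (hts : t ⊆ s)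
    (hm : m ≤ #s) : ∃ u ⊆ s, #u = m ∧ (u ⊆ t ∨ t ⊆ u) := by
  rcases le_total m #t with hmt | htm
  · obtain ⟨u, hut, hu⟩ := exists_subset_card_eq hmt
    exact ⟨u, hut.trans hts, hu, .inl hut⟩
  · obtain ⟨u, htu, hus, hu⟩ := exists_subsuperset_card_eq hts htm hm
    exact ⟨u, hus, hu, .inr htu⟩

theorem exists_subset_card_eq_forall_abs_card_filter_sub_le {V ι : Type*} [DecidableEq V]
    [Fintype ι] (P : ι → V → Prop) [∀ i, DecidablePred (P i)] {s : Finset V} {m : ℕ}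
    (hm : m ≤ #s) {δ : ℝ} (hδ : 0 ≤ δ) (hsize : (Fintype.card ι + 1) * #s ^ 2 ≤ δ ^ 4) :
    ∃ t ⊆ s, #t = m ∧
      ∀ i, |(#(t.filter (P i)) : ℝ) - m / #s * #(s.filter (P i))| ≤ 2 * δ := by
  set c : ℝ := m / #s
  have hc0 : 0 ≤ c := by positivity
  have hc1 : c ≤ 1 := div_le_one_of_le₀ (by exact_mod_cast hm) (Nat.cast_nonneg _)
  have hcs : c * #s = m := by
    rcases Nat.eq_zero_or_pos #s with hs | hs
    · simp [hs, show m = 0 by omega]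
    · exact div_mul_cancel₀ _ (by positivity)
  -- the extra index `none` controls the size of the random subset
  let a : Option ι → V → ℝ := fun i w => i.elim 1 fun j => if P j w then 1 else 0
  obtain ⟨t₀, ht₀s, ht₀⟩ := exists_subset_forall_deviation_pow_four_le hc0 hc1 (a := a)
    (fun i w => by cases i <;> simp [a]; split_ifs <;> norm_num) s
  have hdev : ∀ i, |deviation (a i) c s t₀| ≤ δ := fun i => by
    refine (pow_le_pow_iff_left₀ (abs_nonneg _) hδ four_ne_zero).1 ?_
    rw [Even.pow_abs ⟨2, rfl⟩]
    exact (ht₀ i).trans (by simpa using hsize)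
  obtain ⟨t, hts, htm, hcomp⟩ := exists_subset_card_eq_and_comparable ht₀s hm
  have hsize₀ : |(#t : ℝ) - #t₀| ≤ δ := by
    have hone := deviation_indicator (c := c) (fun _ => True) ht₀s
    simp only [ite_true, filter_true] at hone
    simpa [a, hone, htm, hcs, abs_sub_comm] using hdev none
  refine ⟨t, hts, htm, fun i => ?_⟩
  have hi : |(#(t₀.filter (P i)) : ℝ) - c * #(s.filter (P i))| ≤ δ := by
    simpa [a, deviation_indicator (P i) ht₀s] using hdev (some i)
  calc _ ≤ |(#(t.filter (P i)) : ℝ) - #(t₀.filter (P i))|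
        + |(#(t₀.filter (P i)) : ℝ) - c * #(s.filter (P i))| := abs_sub_le _ _ _
    _ ≤ δ + δ := add_le_add ((abs_card_filter_sub_card_filter_le (P i) hcomp).trans hsize₀) hi
    _ = 2 * δ := by ring

lemma abs_card_filter_sdiff_sub_le {V : Type*} [DecidableEq V] (P : V → Prop) [DecidablePred P]
    {s t : Finset V} (hts : t ⊆ s) {c r : ℝ}
    (h : |(#(t.filter P) : ℝ) - c * #(s.filter P)| ≤ r) :
    |(#((s \ t).filter P) : ℝ) - (1 - c) * #(s.filter P)| ≤ r := by
  have hfilter : (s \ t).filter P = s.filter P \ t.filter P := by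
    ext w; simp only [mem_filter, mem_sdiff]; tauto
  rw [hfilter, card_sdiff_of_subset (filter_subset_filter P hts),
    Nat.cast_sub (card_le_card (filter_subset_filter P hts)), ← abs_neg]
  convert h using 2
  ring

lemma two_mul_add_one_mul_sq_le {ε : ℝ} (hε : 0 < ε) {n k : ℕ} (hn : ⌈48 / ε ^ 4⌉₊ ≤ n)
    (hk : k ≤ n) : (2 * n + 1 : ℝ) * k ^ 2 ≤ (ε * n / 2) ^ 4 := by
  have hn' : 48 / ε ^ 4 ≤ n := Nat.ceil_le.1 hn
  have h48 : 48 ≤ ε ^ 4 * n := by rwa [div_le_iff₀ (by positivity), mul_comm] at hn'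
  have hn1 : (1 : ℝ) ≤ n :=
    Nat.one_le_cast.2 (Nat.cast_pos.1 ((by positivity : 0 < 48 / ε ^ 4).trans_le hn'))
  have hk' : (k : ℝ) ≤ n := by exact_mod_cast hk
  calc (2 * n + 1 : ℝ) * k ^ 2 ≤ (3 * n) * n ^ 2 := by gcongr; linarith
    _ ≤ ε ^ 4 * n / 16 * n ^ 3 := by nlinarith [pow_pos (by linarith : (0 : ℝ) < n) 3]
    _ = (ε * n / 2) ^ 4 := by ring

theorem statement19 (ε : ℝ) (hε : 0 < ε) :
    ∃ n₀ : ℕ, ∀ (V : Type) [Fintype V] (E : V → V → Prop),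
      (∀ v, ¬ E v v) →
      n₀ ≤ Fintype.card V →
      ∀ (S : Set V) (m : ℕ), m ≤ S.ncard →
        ∃ T : Set V, T ⊆ S ∧ T.ncard = m ∧
          ∀ v : V,
            |({w ∈ T | E v w}.ncard : ℝ) -
                (m : ℝ) / (S.ncard : ℝ) * ({w ∈ S | E v w}.ncard : ℝ)| ≤
              ε * (Fintype.card V : ℝ) ∧
            |({w ∈ T | E w v}.ncard : ℝ) -
                (m : ℝ) / (S.ncard : ℝ) * ({w ∈ S | E w v}.ncard : ℝ)| ≤
              ε * (Fintype.card V : ℝ) ∧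
            |({w ∈ S \ T | E v w}.ncard : ℝ) -
                (1 - (m : ℝ) / (S.ncard : ℝ)) * ({w ∈ S | E v w}.ncard : ℝ)| ≤
              ε * (Fintype.card V : ℝ) ∧
            |({w ∈ S \ T | E w v}.ncard : ℝ) -
                (1 - (m : ℝ) / (S.ncard : ℝ)) * ({w ∈ S | E w v}.ncard : ℝ)| ≤
              ε * (Fintype.card V : ℝ) := by
  classical
  refine ⟨⌈48 / ε ^ 4⌉₊, fun V _ E _ hn S m hm => ?_⟩
  obtain ⟨s, rfl⟩ : ∃ s : Finset V, ↑s = S := ⟨S.toFinset, S.coe_toFinset⟩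
  rw [Set.ncard_coe_finset] at hm ⊢
  have hsize : (Fintype.card (V ⊕ V) + 1 : ℝ) * #s ^ 2 ≤ (ε * Fintype.card V / 2) ^ 4 := by
    rw [Fintype.card_sum, Nat.cast_add, ← two_mul]
    exact two_mul_add_one_mul_sq_le hε hn (card_le_univ s)
  obtain ⟨t, hts, htm, ht⟩ := exists_subset_card_eq_forall_abs_card_filter_sub_le
    (Sum.elim (fun v w => E v w) (fun v w => E w v)) hm (by positivity) hsize
  refine ⟨t, mod_cast hts, by rw [Set.ncard_coe_finset, htm], fun v => ?_⟩
  have hncard (u : Finset V) (P : V → Prop) :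
      {w ∈ (u : Set V) | P w}.ncard = #(u.filter P) := by
    simp only [← Set.ncard_coe_finset, coe_filter, mem_coe]
  rw [← coe_sdiff]
  simp only [hncard]
  have hout := ht (.inl v)
  have hin := ht (.inr v)
  have hhalf : 2 * (ε * Fintype.card V / 2) = ε * Fintype.card V := by ring
  simp only [Sum.elim_inl, Sum.elim_inr, hhalf] at hout hin
  exact ⟨hout, hin, abs_card_filter_sdiff_sub_le _ hts hout,
    abs_card_filter_sdiff_sub_le _ hts hin⟩
end
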